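/- arXiv:1911.09569 — 6 statements merged into one kernel-verified Lean document; each statement's English description precedes it below -/
import Mathlib

section
/- If Z ~ Beta(α₁, α₂+⋯+α_q) and V ~ Dir(α₂,…,α_q) are independent with all α_i > 0 and q > 2, then the random vector (Z, (1−Z)·V) has the Dirichlet distribution Dir(α₁,…,α_q). -/
/-!
Both laws are handled through their mixed moments. The monomial `∏ xᵢ ^ kᵢ` evaluated at
`(Z, (1 - Z) V)` factors as `Z ^ k₀ (1 - Z) ^ K · ∏ Vᵢ ^ kᵢ₊₁` with `K = ∑ kᵢ₊₁`, so by
independence its expectation is the Beta moment `B(α₁ + k₀, B + K) / B(α₁, B)` (where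
`B = α₂ + ⋯ + α_q`) times the corresponding Dirichlet moment of `V`; the factors
`Γ(B + K) / Γ(B)` cancel and leave the Dirichlet moment of `Dir(α₁, …, α_q)`. The support
condition holds because `Z ∈ (0, 1)` and `V` lies in the open simplex almost surely.
-/

open MeasureTheory Finset ProbabilityTheory

/-- `IsDirichlet μ a` says that `μ` is the Dirichlet distribution with parameters `a`:
a probability measure concentrated on the open simplex whose mixed moments are those of
the Dirichlet distribution (which determine it uniquely, the support being compact). -/
def IsDirichlet {q : ℕ} (μ : Measure (Fin q → ℝ)) (a : Fin q → ℝ) : Prop :=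
  IsProbabilityMeasure μ ∧
    μ {x | (∀ i, 0 < x i) ∧ ∑ i, x i = 1} = 1 ∧
    ∀ k : Fin q → ℕ,
      ∫ x, ∏ i, (x i) ^ (k i) ∂μ =
        (∏ i, Real.Gamma (a i + k i) / Real.Gamma (a i)) *
          (Real.Gamma (∑ i, a i) / Real.Gamma (∑ i, a i + ∑ i, (k i : ℝ)))

noncomputable def betaMeasure (α β : ℝ) : Measure ℝ :=
  MeasureTheory.volume.withDensity fun x =>
    ENNReal.ofReal
      (if 0 < x ∧ x < 1 then
        (Real.Gamma (α + β) / (Real.Gamma α * Real.Gamma β)) *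
          x ^ (α - 1) * (1 - x) ^ (β - 1)
      else 0)

open Real

lemma integral_rpow_mul_one_sub_rpow_eq_beta {u v : ℝ} (hu : 0 < u) (hv : 0 < v) :
    ∫ x in Set.Ioo (0 : ℝ) 1, x ^ (u - 1) * (1 - x) ^ (v - 1) = beta u v := by
  have hcast : Complex.betaIntegral u v =
      ((∫ x in (0 : ℝ)..1, x ^ (u - 1) * (1 - x) ^ (v - 1) : ℝ) : ℂ) := by
    rw [Complex.betaIntegral, ← intervalIntegral.integral_ofReal]
    refine intervalIntegral.integral_congr fun x hx => ?_
    rw [Set.uIcc_of_le zero_le_one] at hx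
    push_cast [Complex.ofReal_cpow hx.1, Complex.ofReal_cpow (sub_nonneg.2 hx.2)]
    rfl
  rw [beta_eq_betaIntegralReal u v hu hv, hcast, Complex.ofReal_re,
    intervalIntegral.integral_of_le zero_le_one, integral_Ioc_eq_integral_Ioo]

lemma integral_betaMeasure {a b : ℝ} (ha : 0 < a) (hb : 0 < b) (f : ℝ → ℝ) :
    ∫ x, f x ∂_root_.betaMeasure a b =
      ∫ x in Set.Ioo 0 1, ((beta a b)⁻¹ * x ^ (a - 1) * (1 - x) ^ (b - 1)) * f x := by
  rw [_root_.betaMeasure, integral_withDensity_eq_integral_toReal_smul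
    (Measurable.ite measurableSet_Ioo (by fun_prop) (by fun_prop)).ennreal_ofReal
    (ae_of_all _ fun _ => ENNReal.ofReal_lt_top), ← integral_indicator measurableSet_Ioo]
  refine integral_congr_ae (ae_of_all _ fun x => ?_)
  dsimp only
  by_cases hx : 0 < x ∧ x < 1
  · have hdens : 0 ≤ (beta a b)⁻¹ * x ^ (a - 1) * (1 - x) ^ (b - 1) := by
      have := beta_pos ha hb
      have := hx.1; have := hx.2
      positivity
    rw [beta, inv_div] at hdens
    rw [if_pos hx, ENNReal.toReal_ofReal hdens, Set.indicator_of_mem (s := Set.Ioo 0 1) hx,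
      smul_eq_mul, beta, inv_div]
  · rw [if_neg hx, Set.indicator_of_notMem (s := Set.Ioo 0 1) hx, ENNReal.ofReal_zero,
      ENNReal.toReal_zero, zero_smul]

lemma integral_pow_mul_one_sub_pow_betaMeasure {a b : ℝ} (ha : 0 < a) (hb : 0 < b) (n K : ℕ) :
    ∫ z, z ^ n * (1 - z) ^ K ∂_root_.betaMeasure a b = beta (a + n) (b + K) / beta a b := by
  rw [integral_betaMeasure ha hb, div_eq_inv_mul,
    ← integral_rpow_mul_one_sub_rpow_eq_beta (u := a + n) (v := b + K) (by positivity)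
    (by positivity), ← integral_const_mul]
  refine setIntegral_congr_fun measurableSet_Ioo fun x hx => ?_
  rw [← rpow_natCast, ← rpow_natCast, show a + n - 1 = a - 1 + n by ring,
    show b + K - 1 = b - 1 + K by ring, rpow_add hx.1, rpow_add (sub_pos.2 hx.2)]
  ring

lemma ae_mem_Ioo_betaMeasure (a b : ℝ) : ∀ᵐ x ∂_root_.betaMeasure a b, x ∈ Set.Ioo 0 1 := by
  rw [_root_.betaMeasure, ae_withDensity_iff
    (Measurable.ite measurableSet_Ioo (by fun_prop) (by fun_prop)).ennreal_ofReal]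
  refine ae_of_all _ fun x hx => ?_
  by_contra hx'
  exact hx (by rw [if_neg (show ¬(0 < x ∧ x < 1) from hx'), ENNReal.ofReal_zero])

def openSimplex (q : ℕ) : Set (Fin q → ℝ) := {x | (∀ i, 0 < x i) ∧ ∑ i, x i = 1}

lemma measurableSet_openSimplex (q : ℕ) : MeasurableSet (openSimplex q) := by
  rw [openSimplex, Set.ofPred_and, Set.ofPred_forall]
  exact (MeasurableSet.iInter fun i =>
    measurableSet_lt measurable_const (measurable_pi_apply i)).inter
      (measurableSet_eq_fun (by fun_prop) measurable_const)

lemma IsDirichlet.ae_mem_openSimplex {q : ℕ} {μ : Measure (Fin q → ℝ)} {a : Fin q → ℝ}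
    (h : IsDirichlet μ a) : ∀ᵐ x ∂μ, x ∈ openSimplex q :=
  have := h.1
  (ae_mem_iff_measure_eq (measurableSet_openSimplex q).nullMeasurableSet).2
    (h.2.1.trans measure_univ.symm)

lemma IsDirichlet.nonempty {q : ℕ} {μ : Measure (Fin q → ℝ)} {a : Fin q → ℝ}
    (h : IsDirichlet μ a) : Nonempty (Fin q) := by
  have := h.1
  obtain ⟨x, -, hx⟩ := h.ae_mem_openSimplex.exists
  by_contra hq
  simp [not_nonempty_iff.1 hq] at hx

def stickBreak {m : ℕ} (z : ℝ) (v : Fin m → ℝ) : Fin (m + 1) → ℝ :=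
  Fin.cons z fun i => (1 - z) * v i

lemma measurable_stickBreak (m : ℕ) :
    Measurable fun p : ℝ × (Fin m → ℝ) => stickBreak p.1 p.2 := by
  refine measurable_pi_lambda _ fun i => Fin.cases ?_ (fun j => ?_) i
  · exact measurable_fst
  · exact (measurable_const.sub measurable_fst).mul ((measurable_pi_apply j).comp measurable_snd)

lemma stickBreak_mem_openSimplex {m : ℕ} {z : ℝ} {v : Fin m → ℝ} (hz : z ∈ Set.Ioo 0 1)
    (hv : v ∈ openSimplex m) : stickBreak z v ∈ openSimplex (m + 1) := by
  refine ⟨fun i => Fin.cases hz.1 (fun j => mul_pos (sub_pos.2 hz.2) (hv.1 j)) i, ?_⟩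
  simp only [stickBreak, Fin.sum_cons, ← Finset.mul_sum, hv.2]
  ring

lemma prod_stickBreak_pow {m : ℕ} (z : ℝ) (v : Fin m → ℝ) (k : Fin (m + 1) → ℕ) :
    ∏ i, stickBreak z v i ^ k i =
      z ^ k 0 * (1 - z) ^ (∑ i : Fin m, k i.succ) * ∏ i, v i ^ k i.succ := by
  simp only [Fin.prod_univ_succ, stickBreak, Fin.cons_zero, Fin.cons_succ, mul_pow,
    Finset.prod_mul_distrib, Finset.prod_pow_eq_pow_sum]
  ring

lemma measurable_prod_pow {q : ℕ} (k : Fin q → ℕ) :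
    Measurable fun x : Fin q → ℝ => ∏ i, x i ^ k i :=
  Finset.measurable_prod _ fun i _ => (measurable_pi_apply i).pow_const _

noncomputable def dirichletMoment {q : ℕ} (a : Fin q → ℝ) (k : Fin q → ℕ) : ℝ :=
  (∏ i, Gamma (a i + k i) / Gamma (a i)) *
    (Gamma (∑ i, a i) / Gamma (∑ i, a i + ∑ i, (k i : ℝ)))

lemma dirichletMoment_cons {m : ℕ} {a : ℝ} {β : Fin m → ℝ} (hβ : 0 < ∑ i, β i)
    (k : Fin (m + 1) → ℕ) :
    dirichletMoment (Fin.cons a β) k =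
      beta (a + k 0) (∑ i, β i + ↑(∑ i : Fin m, k i.succ)) / beta a (∑ i, β i) *
        dirichletMoment β fun i => k i.succ := by
  have hK : (0 : ℝ) ≤ ∑ i : Fin m, (k i.succ : ℝ) := by positivity
  have h2 : Gamma (∑ i, β i) ≠ 0 := (Gamma_pos_of_pos hβ).ne'
  have h3 : Gamma (∑ i, β i + ∑ i : Fin m, (k i.succ : ℝ)) ≠ 0 :=
    (Gamma_pos_of_pos (by linarith)).ne'
  simp only [dirichletMoment, beta, Fin.prod_univ_succ, Fin.sum_univ_succ, Fin.cons_zero,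
    Fin.cons_succ]
  push_cast
  field_simp
  rw [add_add_add_comm]

theorem isDirichlet_map_stickBreak {Ω : Type*} {_ : MeasurableSpace Ω} {μ : Measure Ω}
    [IsProbabilityMeasure μ] {m : ℕ} {a : ℝ} (ha : 0 < a) {β : Fin m → ℝ} (hβ : ∀ i, 0 < β i)
    {Z : Ω → ℝ} {V : Ω → Fin m → ℝ} (hZm : AEMeasurable Z μ) (hVm : AEMeasurable V μ)
    (hZ : μ.map Z = _root_.betaMeasure a (∑ i, β i)) (hV : IsDirichlet (μ.map V) β)
    (hZV : IndepFun Z V μ) :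
    IsDirichlet (μ.map fun ω => stickBreak (Z ω) (V ω)) (Fin.cons a β) := by
  have := hV.nonempty
  have hB : 0 < ∑ i, β i := Finset.sum_pos (fun i _ => hβ i) Finset.univ_nonempty
  have hSm : AEMeasurable (fun ω => stickBreak (Z ω) (V ω)) μ :=
    (measurable_stickBreak m).comp_aemeasurable (hZm.prodMk hVm)
  have hprob := Measure.isProbabilityMeasure_map hSm
  refine ⟨hprob, ?_, fun k => ?_⟩
  · have hZIoo : ∀ᵐ ω ∂μ, Z ω ∈ Set.Ioo 0 1 :=
      ae_of_ae_map hZm (hZ ▸ ae_mem_Ioo_betaMeasure _ _)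
    have hVsimplex : ∀ᵐ ω ∂μ, V ω ∈ openSimplex m := ae_of_ae_map hVm hV.ae_mem_openSimplex
    have hsimplex : ∀ᵐ x ∂μ.map fun ω => stickBreak (Z ω) (V ω), x ∈ openSimplex (m + 1) :=
      (ae_map_iff hSm (measurableSet_openSimplex _)).2 <| by
        filter_upwards [hZIoo, hVsimplex] with ω hz hv using stickBreak_mem_openSimplex hz hv
    exact ((ae_mem_iff_measure_eq (measurableSet_openSimplex _).nullMeasurableSet).1
      hsimplex).trans measure_univ
  · set K := ∑ i : Fin m, k i.succ
    have hZmom : ∫ ω, Z ω ^ k 0 * (1 - Z ω) ^ K ∂μ =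
        beta (a + k 0) (∑ i, β i + K) / beta a (∑ i, β i) := by
      rw [← integral_pow_mul_one_sub_pow_betaMeasure ha hB, ← hZ, integral_map hZm (by fun_prop)]
    have hVmom : ∫ ω, ∏ i, V ω i ^ k i.succ ∂μ = dirichletMoment β fun i => k i.succ :=
      (integral_map hVm (measurable_prod_pow _).aestronglyMeasurable).symm.trans (hV.2.2 _)
    calc ∫ x, ∏ i, x i ^ k i ∂μ.map (fun ω => stickBreak (Z ω) (V ω))
        = ∫ ω, Z ω ^ k 0 * (1 - Z ω) ^ K * ∏ i, V ω i ^ k i.succ ∂μ := by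
          rw [integral_map hSm (measurable_prod_pow k).aestronglyMeasurable]
          simp_rw [prod_stickBreak_pow]
          rfl
      _ = (∫ ω, Z ω ^ k 0 * (1 - Z ω) ^ K ∂μ) * ∫ ω, ∏ i, V ω i ^ k i.succ ∂μ :=
          hZV.integral_comp_mul_comp (f := fun z => z ^ k 0 * (1 - z) ^ K)
            (g := fun v => ∏ i, v i ^ k i.succ) hZm hVm (by fun_prop)
            (measurable_prod_pow _).aestronglyMeasurable
      _ = dirichletMoment (Fin.cons a β) k := by rw [hZmom, hVmom, dirichletMoment_cons hB]

theorem beta_dirichlet_glue_general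
    {Ω : Type*} {m0 : MeasurableSpace Ω} {μ : Measure Ω} [IsProbabilityMeasure μ]
    (m : ℕ) (α : Fin (m + 1) → ℝ) (hα : ∀ i, 0 < α i)
    (Z : Ω → ℝ) (V : Ω → (Fin m → ℝ)) (hZm : Measurable Z) (hVm : Measurable V)
    (hZ : μ.map Z = _root_.betaMeasure (α 0) (∑ i : Fin m, α i.succ))
    (hV : IsDirichlet (μ.map V) (fun i => α i.succ))
    (hindep : IndepFun Z V μ) :
    IsDirichlet
      (μ.map fun ω => Fin.cons (Z ω) (fun i => (1 - Z ω) * V ω i)) α :=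
  Fin.cons_self_tail α ▸ isDirichlet_map_stickBreak (hα 0) (fun i => hα i.succ)
    hZm.aemeasurable hVm.aemeasurable hZ hV hindep

/-- If `Z ~ Beta(α₁, α₂+⋯+α_q)` and `V ~ Dir(α₂,…,α_q)` are independent (`q > 2`), then
`(Z, (1−Z)·V) ~ Dir(α₁,…,α_q)`.  Here `q = m + 1`. -/
theorem beta_dirichlet_glue
    {Ω : Type*} {m0 : MeasurableSpace Ω} {μ : Measure Ω} [IsProbabilityMeasure μ]
    (m : ℕ) (hm : 2 ≤ m) (α : Fin (m + 1) → ℝ) (hα : ∀ i, 0 < α i)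
    (Z : Ω → ℝ) (V : Ω → (Fin m → ℝ)) (hZm : Measurable Z) (hVm : Measurable V)
    (hZ : μ.map Z = _root_.betaMeasure (α 0) (∑ i : Fin m, α i.succ))
    (hV : IsDirichlet (μ.map V) (fun i => α i.succ))
    (hindep : IndepFun Z V μ) :
    IsDirichlet
      (μ.map fun ω => Fin.cons (Z ω) (fun i => (1 - Z ω) * V ω i)) α :=
  beta_dirichlet_glue_general (m0 := m0) m α hα Z V hZm hVm hZ hV hindep
end

section
/- If W is a real-valued random variable with a continuous distribution (i.e., absolutely continuous, or just atomless with density), then the fractional part {nW} converges in distribution to the uniform distribution on (0,1) as n → ∞. -/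
/-!
With `F` the density of `W` and `φ` the indicator of `{s | fract s ≤ x}`, which is `1`-periodic
with mean `max 0 (min x 1)`, we have `P({nW} ≤ x) = ∫ F(t) φ(nt) dt`, so it suffices that
`∫ F(t) φ(nt) dt → (∫₀¹ φ) · ∫ F` for bounded measurable `1`-periodic `φ` and integrable `F`.
Once the mean of `φ` is subtracted, `φ(n ·)` integrates to zero over each period `[a, a + 1/n]`,
so there `g(t)` may be replaced by `g(t) - g(a)`: for continuous compactly supported `g` this makes
`∫ g(t) φ(nt) dt` as small as the oscillation of `g` at scale `1/n`. Such `g` are dense in `L¹`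
and `|∫ F(t) φ(nt) dt| ≤ sup |φ| · ‖F‖₁`, which gives the general case.
-/

open MeasureTheory Filter Function Topology

theorem intervalIntegrable_comp_mul_of_abs_le {ψ : ℝ → ℝ} {C : ℝ} (hψm : Measurable ψ)
    (hψC : ∀ s, |ψ s| ≤ C) (n a b : ℝ) :
    IntervalIntegrable (fun t => ψ (n * t)) volume a b :=
  intervalIntegrable_const.mono_fun' (hψm.comp (measurable_const_mul n)).aestronglyMeasurable
    (ae_of_all _ fun t => hψC (n * t))

namespace Function.Periodic

theorem intervalIntegral_comp_mul_eq {ψ : ℝ → ℝ} (hψ : Periodic ψ 1) {n : ℝ} (hn : n ≠ 0)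
    (a : ℝ) : ∫ t in a..a + n⁻¹, ψ (n * t) = n⁻¹ * ∫ s in (0 : ℝ)..1, ψ s := by
  rw [intervalIntegral.integral_comp_mul_left _ hn, mul_add, mul_inv_cancel₀ hn,
    hψ.intervalIntegral_add_eq _ 0, zero_add, smul_eq_mul]

theorem abs_intervalIntegral_mul_comp_mul_le {ψ g : ℝ → ℝ} {C ε : ℝ} (hψ : Periodic ψ 1)
    (hψm : Measurable ψ) (hψC : ∀ s, |ψ s| ≤ C) (hψ0 : ∫ s in (0 : ℝ)..1, ψ s = 0)
    (hg : Continuous g) {n : ℝ} (hn : 0 < n) {a : ℝ}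
    (hgε : ∀ t ∈ Set.Ioc a (a + n⁻¹), |g t - g a| ≤ ε) :
    |∫ t in a..a + n⁻¹, g t * ψ (n * t)| ≤ ε * C * n⁻¹ := by
  have hψn := intervalIntegrable_comp_mul_of_abs_le hψm hψC n a (a + n⁻¹)
  have hshift : ∫ t in a..a + n⁻¹, g t * ψ (n * t)
      = ∫ t in a..a + n⁻¹, (g t - g a) * ψ (n * t) := by
    simp_rw [sub_mul]
    rw [intervalIntegral.integral_sub (hψn.continuousOn_mul hg.continuousOn)
      (hψn.const_mul _), intervalIntegral.integral_const_mul,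
      hψ.intervalIntegral_comp_mul_eq hn.ne', hψ0, mul_zero, mul_zero, sub_zero]
  have hε : 0 ≤ ε := (abs_nonneg _).trans (hgε _ ⟨by simpa using hn, le_rfl⟩)
  have hbound : ∀ t ∈ Set.uIoc a (a + n⁻¹), ‖(g t - g a) * ψ (n * t)‖ ≤ ε * C := by
    intro t ht
    rw [Set.uIoc_of_le (by simpa using hn.le)] at ht
    rw [Real.norm_eq_abs, abs_mul]
    exact mul_le_mul (hgε t ht) (hψC _) (abs_nonneg _) hε
  calc |∫ t in a..a + n⁻¹, g t * ψ (n * t)|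
      = ‖∫ t in a..a + n⁻¹, (g t - g a) * ψ (n * t)‖ := by rw [hshift, Real.norm_eq_abs]
    _ ≤ ε * C * |a + n⁻¹ - a| := intervalIntegral.norm_integral_le_of_norm_le_const hbound
    _ = ε * C * n⁻¹ := by rw [add_sub_cancel_left, abs_of_pos (inv_pos.2 hn)]

theorem abs_intervalIntegral_mul_comp_mul_le_nat_mul {ψ g : ℝ → ℝ} {C ε : ℝ}
    (hψ : Periodic ψ 1) (hψm : Measurable ψ) (hψC : ∀ s, |ψ s| ≤ C)
    (hψ0 : ∫ s in (0 : ℝ)..1, ψ s = 0) (hg : Continuous g) {n : ℝ} (hn : 0 < n)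
    (hgε : ∀ t s, |t - s| ≤ n⁻¹ → |g t - g s| ≤ ε) (a : ℝ) (N : ℕ) :
    |∫ t in a..a + N * n⁻¹, g t * ψ (n * t)| ≤ N * (ε * C * n⁻¹) := by
  have hint : ∀ b c, IntervalIntegrable (fun t => g t * ψ (n * t)) volume b c := fun b c =>
    (intervalIntegrable_comp_mul_of_abs_le hψm hψC n b c).continuousOn_mul hg.continuousOn
  induction N with
  | zero => simp
  | succ N ih =>
    have hcell := hψ.abs_intervalIntegral_mul_comp_mul_le hψm hψC hψ0 hg hn
      (a := a + N * n⁻¹) (ε := ε) fun t ht => hgε _ _ (by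
        rw [abs_of_nonneg (by linarith [ht.1])]; linarith [ht.2])
    rw [← intervalIntegral.integral_add_adjacent_intervals (hint _ _) (hint _ _),
      show a + (N + 1 : ℕ) * n⁻¹ = a + N * n⁻¹ + n⁻¹ by push_cast; ring]
    calc _ ≤ _ := abs_add_le _ _
      _ ≤ N * (ε * C * n⁻¹) + ε * C * n⁻¹ := add_le_add ih hcell
      _ = _ := by push_cast; ring

theorem tendsto_integral_mul_comp_mul_of_hasCompactSupport {ψ g : ℝ → ℝ} {C : ℝ}
    (hψ : Periodic ψ 1) (hψm : Measurable ψ) (hψC : ∀ s, |ψ s| ≤ C)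
    (hψ0 : ∫ s in (0 : ℝ)..1, ψ s = 0) (hg : Continuous g) (hgc : HasCompactSupport g) :
    Tendsto (fun n : ℕ => ∫ t, g t * ψ (n * t)) atTop (𝓝 0) := by
  obtain ⟨R, hR⟩ := (Metric.isBounded_iff_subset_closedBall 0).1 hgc.isCompact.isBounded
  obtain ⟨K, hRK⟩ := exists_nat_gt R
  have hK : ∀ f : ℝ → ℝ, ∫ t, g t * f t = ∫ t in -(K : ℝ)..K, g t * f t := fun f => by
    rw [intervalIntegral.integral_of_le (by linarith [K.cast_nonneg (α := ℝ)])]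
    refine (setIntegral_eq_integral_of_forall_compl_eq_zero fun t ht => ?_).symm
    have : t ∉ tsupport g := fun hts => ht <| by
      have := abs_le.1 (by simpa using hR hts)
      exact ⟨by linarith, by linarith⟩
    rw [image_eq_zero_of_notMem_tsupport this, zero_mul]
  have hC : 0 ≤ C := (abs_nonneg _).trans (hψC 0)
  rw [Metric.tendsto_atTop]
  intro ε hε
  set ε' := ε / (2 * K * C + 1)
  obtain ⟨δ, hδ, hgδ⟩ := Metric.uniformContinuous_iff.1
    (hgc.uniformContinuous_of_continuous hg) ε' (by positivity)
  obtain ⟨N, hN⟩ := exists_nat_one_div_lt hδ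
  refine ⟨N + 1, fun n hn => ?_⟩
  have hn' : (0 : ℝ) < n := Nat.cast_pos.2 (by omega)
  have hnδ : (n : ℝ)⁻¹ < δ := lt_of_le_of_lt (by
    rw [one_div]; gcongr; exact_mod_cast hn) hN
  have hblock := hψ.abs_intervalIntegral_mul_comp_mul_le_nat_mul hψm hψC hψ0 hg hn'
    (fun t s hts => (hgδ (lt_of_le_of_lt hts hnδ)).le) (-K) (2 * K * n)
  rw [show -(K : ℝ) + (2 * K * n : ℕ) * (n : ℝ)⁻¹ = K by field_simp; push_cast; ring] at hblock
  rw [Real.dist_eq, sub_zero, hK]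
  calc _ ≤ _ := hblock
    _ = 2 * K * C * ε' := by field_simp; push_cast; ring
    _ < ε := by
      rw [mul_div_assoc', div_lt_iff₀ (by positivity)]
      nlinarith

theorem tendsto_integral_mul_comp_mul_of_integral_eq_zero {ψ F : ℝ → ℝ} {C : ℝ}
    (hψ : Periodic ψ 1) (hψm : Measurable ψ) (hψC : ∀ s, |ψ s| ≤ C)
    (hψ0 : ∫ s in (0 : ℝ)..1, ψ s = 0) (hF : Integrable F) :
    Tendsto (fun n : ℕ => ∫ t, F t * ψ (n * t)) atTop (𝓝 0) := by
  have hC : 0 ≤ C := (abs_nonneg _).trans (hψC 0)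
  have hψn : ∀ n : ℝ, AEStronglyMeasurable (fun t => ψ (n * t)) :=
    fun n => (hψm.comp (measurable_const_mul n)).aestronglyMeasurable
  have hlip : ∀ {f : ℝ → ℝ}, Integrable f → ∀ n : ℝ,
      |∫ t, f t * ψ (n * t)| ≤ C * ∫ t, |f t| := fun {f} hf n => by
    rw [← integral_const_mul, ← Real.norm_eq_abs]
    refine norm_integral_le_of_norm_le (hf.abs.const_mul C) (ae_of_all _ fun t => ?_)
    rw [norm_mul, mul_comm C, Real.norm_eq_abs, Real.norm_eq_abs]
    exact mul_le_mul_of_nonneg_left (hψC _) (abs_nonneg _)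
  rw [Metric.tendsto_atTop]
  intro ε hε
  obtain ⟨g, hgc, hFg, hg, hgi⟩ :=
    hF.exists_hasCompactSupport_integral_sub_le (ε := ε / (2 * (C + 1))) (by positivity)
  obtain ⟨N, hN⟩ := Metric.tendsto_atTop.1
    (hψ.tendsto_integral_mul_comp_mul_of_hasCompactSupport hψm hψC hψ0 hg hgc) (ε / 2)
    (by positivity)
  refine ⟨N, fun n hn => ?_⟩
  have hFψ : Integrable (fun t => F t * ψ (n * t)) :=
    hF.mul_bdd (hψn n) (ae_of_all _ fun t => hψC _)
  have hgψ : Integrable (fun t => g t * ψ (n * t)) :=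
    hgi.mul_bdd (hψn n) (ae_of_all _ fun t => hψC _)
  have hsplit : ∫ t, F t * ψ (n * t)
      = (∫ t, (F t - g t) * ψ (n * t)) + ∫ t, g t * ψ (n * t) := by
    simp_rw [sub_mul]
    rw [integral_sub hFψ hgψ, sub_add_cancel]
  have happrox : |∫ t, (F t - g t) * ψ (n * t)| < ε / 2 := by
    refine (hlip (hF.sub hgi) n).trans_lt
      (lt_of_le_of_lt (mul_le_mul_of_nonneg_left hFg hC) ?_)
    rw [mul_div_assoc', div_lt_div_iff₀ (by positivity) two_pos]
    nlinarith
  have hcc := hN n hn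
  rw [Real.dist_eq, sub_zero] at hcc ⊢
  calc |∫ t, F t * ψ (n * t)|
      ≤ |∫ t, (F t - g t) * ψ (n * t)| + |∫ t, g t * ψ (n * t)| := hsplit ▸ abs_add_le _ _
    _ < ε / 2 + ε / 2 := add_lt_add happrox hcc
    _ = ε := add_halves ε

theorem tendsto_integral_mul_comp_mul {φ F : ℝ → ℝ} {C : ℝ} (hφ : Periodic φ 1)
    (hφm : Measurable φ) (hφC : ∀ s, |φ s| ≤ C) (hF : Integrable F) :
    Tendsto (fun n : ℕ => ∫ t, F t * φ (n * t)) atTop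
      (𝓝 ((∫ s in (0 : ℝ)..1, φ s) * ∫ t, F t)) := by
  set c := ∫ s in (0 : ℝ)..1, φ s
  have hmean : ∫ s in (0 : ℝ)..1, (φ s - c) = 0 := by
    rw [intervalIntegral.integral_sub (intervalIntegrable_const.mono_fun'
      hφm.aestronglyMeasurable (ae_of_all _ hφC)) intervalIntegrable_const]
    simp [c]
  have h := tendsto_integral_mul_comp_mul_of_integral_eq_zero
    (fun s => congrArg (· - c) (hφ s)) (hφm.sub_const c)
    (fun s => (abs_sub _ _).trans (add_le_add (hφC s) le_rfl)) hmean hF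
  have h' := h.add_const (c * ∫ t, F t)
  rw [zero_add] at h'
  refine h'.congr fun n => ?_
  have hFφ : Integrable (fun t => F t * φ (n * t)) :=
    hF.mul_bdd (hφm.comp (measurable_const_mul _)).aestronglyMeasurable
      (ae_of_all _ fun t => hφC _)
  simp_rw [mul_sub]
  rw [integral_sub hFφ (hF.mul_const c), integral_mul_const, mul_comm c, sub_add_cancel]

end Function.Periodic

theorem intervalIntegral_indicator_fract_le (x : ℝ) :
    ∫ s in (0 : ℝ)..1, {s : ℝ | Int.fract s ≤ x}.indicator 1 s = max 0 (min x 1) := by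
  rw [intervalIntegral.integral_of_le zero_le_one, integral_Ioc_eq_integral_Ioo,
    setIntegral_congr_fun measurableSet_Ioo (g := (Set.Iic x).indicator 1) fun s hs => by
      simp [Set.indicator_apply, Int.fract_eq_self.2 ⟨hs.1.le, hs.2⟩],
    integral_indicator_one measurableSet_Iic, measureReal_restrict_apply measurableSet_Iic,
    measureReal_congr ((Iio_ae_eq_Iic (a := x) (μ := volume)).symm.inter
      (ae_eq_refl (Set.Ioo (0 : ℝ) 1))),
    Set.Iio_inter_Ioo, Real.volume_real_Ioo, sub_zero, max_comm]

theorem measureReal_preimage_eq_integral_rnDeriv_mul_indicator {Ω α : Type*}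
    {mΩ : MeasurableSpace Ω} {mα : MeasurableSpace α} {μ : Measure Ω} [IsFiniteMeasure μ]
    {ν : Measure α} [SigmaFinite ν] {X : Ω → α} (hX : Measurable X) (hac : μ.map X ≪ ν)
    {S : Set α} (hS : MeasurableSet S) :
    μ.real (X ⁻¹' S) = ∫ a, ((μ.map X).rnDeriv ν a).toReal * S.indicator 1 a ∂ν := by
  rw [← map_measureReal_apply hX hS, ← Measure.setIntegral_toReal_rnDeriv hac,
    ← integral_indicator hS]
  congr 1 with a
  by_cases ha : a ∈ S <;> simp [ha]

/-- If `W` has an absolutely continuous distribution, then the fractional part `{nW}`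
converges in distribution to `Uniform(0,1)` as `n → ∞`; equivalently, its cdf converges
pointwise to the (everywhere continuous) cdf `x ↦ max 0 (min x 1)` of `Uniform(0,1)`. -/
theorem fract_tendsto_uniform
    {Ω : Type*} {m0 : MeasurableSpace Ω} {μ : Measure Ω} [IsProbabilityMeasure μ]
    (W : Ω → ℝ) (hW : Measurable W) (hac : μ.map W ≪ MeasureTheory.volume) :
    ∀ x : ℝ,
      Tendsto (fun n : ℕ => (μ {ω | Int.fract ((n : ℝ) * W ω) ≤ x}).toReal)
        atTop (nhds (max 0 (min x 1))) := by
  intro x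
  have : IsProbabilityMeasure (μ.map W) := Measure.isProbabilityMeasure_map hW.aemeasurable
  set φ : ℝ → ℝ := {s | Int.fract s ≤ x}.indicator 1
  have hφ : Periodic φ 1 := fun s => by simp [φ, Set.indicator_apply, Int.fract_add_one]
  have hφm : Measurable φ :=
    measurable_const.indicator (measurableSet_le measurable_fract measurable_const)
  have hφC : ∀ s, |φ s| ≤ 1 := fun s => by
    by_cases hs : Int.fract s ≤ x <;> simp [φ, hs]
  have h := hφ.tendsto_integral_mul_comp_mul hφm hφC
    (Measure.integrable_toReal_rnDeriv (μ := μ.map W) (ν := volume))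
  rw [intervalIntegral_indicator_fract_le, Measure.integral_toReal_rnDeriv hac, probReal_univ,
    mul_one] at h
  exact h.congr fun n => (measureReal_preimage_eq_integral_rnDeriv_mul_indicator hW hac
    (measurableSet_le (measurable_fract.comp (measurable_const_mul _)) measurable_const)).symm
end

section
/- For fixed a,b ≥ 0 there exists a constant C such that for all real x ≥ 1, |Γ(x+a)/Γ(x+b) − x^{a−b}| ≤ C·x^{a−b−1}. -/
/-!
`log ∘ Γ` is convex and satisfies `log Γ(y + 1) = log Γ(y) + log y`. Comparing its secant slope
over `[x, x + c]` with the unit-step slopes `log x` and `log (x + c)` on either side pins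
`log Γ(x + c) - log Γ(x)` to `c log x + O(1/x)`. Subtracting the estimates for `c = a` and
`c = b` and exponentiating gives the claim.
-/

open Real Set

lemma log_Gamma_add_one {y : ℝ} (hy : 0 < y) :
    log (Gamma (y + 1)) = log (Gamma y) + log y := by
  rw [Gamma_add_one hy.ne', log_mul hy.ne' (Gamma_pos_of_pos hy).ne', add_comm]

lemma log_Gamma_add_sub_le {y c : ℝ} (hy : 0 < y) (hc : 0 ≤ c) :
    log (Gamma (y + c)) - log (Gamma y) ≤ c * log (y + c) := by
  rcases hc.eq_or_lt with rfl | hc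
  · simp
  have hslope := convexOn_log_Gamma.slope_mono_adjacent (x := y) (y := y + c) (z := y + c + 1)
    hy (mem_Ioi.2 (by linarith)) (by linarith) (by linarith)
  simp only [Function.comp_apply, add_sub_cancel_left, div_one,
    log_Gamma_add_one (by linarith : 0 < y + c)] at hslope
  rwa [div_le_iff₀ hc, mul_comm] at hslope

lemma mul_log_le_log_Gamma_add_sub {y c : ℝ} (hy : 0 < y) (hc : 0 ≤ c) :
    c * log y ≤ log (Gamma (y + c + 1)) - log (Gamma (y + 1)) := by
  rcases hc.eq_or_lt with rfl | hc
  · simp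
  have hslope := convexOn_log_Gamma.slope_mono_adjacent (x := y) (y := y + 1) (z := y + c + 1)
    hy (mem_Ioi.2 (by linarith)) (by linarith) (by linarith)
  simp only [Function.comp_apply, log_Gamma_add_one hy] at hslope
  rwa [show y + c + 1 - (y + 1) = c by ring, add_sub_cancel_left, add_sub_cancel_left, div_one,
    le_div_iff₀ hc, mul_comm, ← log_Gamma_add_one hy] at hslope

lemma log_add_sub_log_le {x c : ℝ} (hx : 0 < x) (hc : 0 ≤ c) : log (x + c) - log x ≤ c / x := by
  rw [← log_div (by linarith) hx.ne']
  calc log ((x + c) / x) ≤ (x + c) / x - 1 := log_le_sub_one_of_pos (by positivity)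
    _ = c / x := by field_simp; ring

lemma abs_log_Gamma_add_sub_sub_mul_log_le {x c : ℝ} (hx : 0 < x) (hc : 0 ≤ c) :
    |log (Gamma (x + c)) - log (Gamma x) - c * log x| ≤ c * (1 + c) / x := by
  have hlog := log_add_sub_log_le hx hc
  have hupper := log_Gamma_add_sub_le hx hc
  have hlower := mul_log_le_log_Gamma_add_sub hx hc
  rw [log_Gamma_add_one (by linarith), log_Gamma_add_one hx] at hlower
  have hclog : c * log (x + c) - c * log x ≤ c * (c / x) := by
    rw [← mul_sub]; exact mul_le_mul_of_nonneg_left hlog hc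
  have hsplit : c * (1 + c) / x = c / x + c * (c / x) := by ring
  have hcx : 0 ≤ c / x := by positivity
  have hccx : 0 ≤ c * (c / x) := by positivity
  rw [abs_le]
  constructor <;> linarith

lemma abs_exp_sub_one_le_mul_exp_abs (u : ℝ) : |exp u - 1| ≤ |u| * exp |u| := by
  rcases le_total 0 u with hu | hu
  · have h := mul_le_mul_of_nonneg_left (add_one_le_exp (-u)) (exp_pos u).le
    rw [mul_add_one, ← exp_add, add_neg_cancel, exp_zero] at h
    rw [abs_of_nonneg hu, abs_of_nonneg (sub_nonneg.2 (one_le_exp hu))]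
    linarith
  · rw [abs_of_nonpos hu, abs_of_nonpos (by linarith [exp_le_one_iff.2 hu])]
    nlinarith [add_one_le_exp u, one_le_exp (neg_nonneg.2 hu)]

lemma abs_sub_le_of_abs_log_sub_le {r s ε : ℝ} (hr : 0 < r) (hs : 0 < s)
    (h : |log r - log s| ≤ ε) : |r - s| ≤ s * (ε * exp ε) := by
  have hrs : r = s * exp (log r - log s) := by
    rw [exp_sub, exp_log hr, exp_log hs]; field_simp
  have hε : 0 ≤ ε := (abs_nonneg _).trans h
  calc |r - s| = |s * exp (log r - log s) - s| := by rw [← hrs]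
    _ = s * |exp (log r - log s) - 1| := by rw [← mul_sub_one, abs_mul, abs_of_pos hs]
    _ ≤ s * (ε * exp ε) := by
        gcongr
        exact (abs_exp_sub_one_le_mul_exp_abs _).trans (by gcongr)

/-- Ratio asymptotics for the Gamma function: `Γ(x+a)/Γ(x+b) = x^{a−b}(1 + O(1/x))`. -/
theorem gamma_ratio_asymptotic (a b : ℝ) (ha : 0 ≤ a) (hb : 0 ≤ b) :
    ∃ C : ℝ, ∀ x : ℝ, 1 ≤ x →
      |Real.Gamma (x + a) / Real.Gamma (x + b) - x ^ (a - b)| ≤ C * x ^ (a - b - 1) := by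
  set K := a * (1 + a) + b * (1 + b)
  refine ⟨K * exp K, fun x hx => ?_⟩
  have hx0 : 0 < x := by linarith
  have hGa := Gamma_pos_of_pos (by linarith : 0 < x + a)
  have hGb := Gamma_pos_of_pos (by linarith : 0 < x + b)
  have hlog : |log (Gamma (x + a) / Gamma (x + b)) - log (x ^ (a - b))| ≤ K / x := by
    rw [log_div hGa.ne' hGb.ne', log_rpow hx0, add_div]
    calc _ = |(log (Gamma (x + a)) - log (Gamma x) - a * log x)
          - (log (Gamma (x + b)) - log (Gamma x) - b * log x)| := by ring_nf
      _ ≤ _ := (abs_sub _ _).trans (add_le_add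
          (abs_log_Gamma_add_sub_sub_mul_log_le hx0 ha) (abs_log_Gamma_add_sub_sub_mul_log_le hx0 hb))
  have hK : K / x ≤ K := div_le_self (by positivity) hx
  calc _ ≤ x ^ (a - b) * (K / x * exp (K / x)) :=
        abs_sub_le_of_abs_log_sub_le (div_pos hGa hGb) (by positivity) hlog
    _ ≤ x ^ (a - b) * (K / x * exp K) := by gcongr
    _ = K * exp K * x ^ (a - b - 1) := by rw [rpow_sub_one hx0.ne']; ring
end

section
/- For a two-color Pólya urn with a=1 and initial composition (α,β), there is a constant C such that for all n ≥ 1 and 1 ≤ k ≤ n−1, |P(Y_n = k) − n^{-1} f_{α,β}(k/n)| ≤ C·n^{-1} f_{α,β}(k/n)·(1/k + 1/(n−k)), where f_{α,β} is the Beta(α,β) density. -/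
/-!
Solving the urn recursion gives the Gamma-function formula
`P(Y_n = k) = B(α,β)⁻¹ Γ(k+α) Γ(n-k+β) Γ(n+1) / (Γ(k+1) Γ(n-k+1) Γ(n+α+β))`.
Writing `Γ(x + a) = Γ(x) x^a g_a(x)`, it becomes exactly
`n⁻¹ f_{α,β}(k/n) · g_α(k) g_β(n-k) / g_{α+β}(n)`, so it suffices that `g_a(x) = 1 + O(1/x)`
uniformly on `x ≥ 1`. For `0 < a < 1` this is Wendel's inequality `x/(x+a) ≤ g_a(x) ≤ 1`, a
consequence of the log-convexity of `Γ`; the recurrence `g_{a+1}(x) = (1 + a/x) g_a(x)` carries it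
to every `a ≥ 0`.
-/

/-- The law of `Y_n` for the two-colour Pólya urn with unit replacement and initial
weights `α, β`: `polyaP α β n i = P(Y_n = i)`. -/
noncomputable def polyaP (α β : ℝ) : ℕ → ℕ → ℝ
  | 0, i => if i = 0 then 1 else 0
  | n + 1, 0 => polyaP α β n 0 * ((β + n) / (α + β + n))
  | n + 1, j + 1 =>
      polyaP α β n (j + 1) * ((β + ((n : ℝ) - (j + 1))) / (α + β + n)) +
        polyaP α β n j * ((α + j) / (α + β + n))

/-- The Beta(α,β) density on `(0,1)`. -/
noncomputable def betaDen (α β x : ℝ) : ℝ :=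
  (Real.Gamma (α + β) / (Real.Gamma α * Real.Gamma β)) * x ^ (α - 1) * (1 - x) ^ (β - 1)

open Real

theorem Gamma_add_le_Gamma_mul_rpow {p t : ℝ} (hp : 0 < p) (ht₀ : 0 < t) (ht₁ : t < 1) :
    Gamma (p + t) ≤ Gamma p * p ^ t := by
  have hΓ := Gamma_pos_of_pos hp
  calc Gamma (p + t) = Gamma ((1 - t) * p + t * (p + 1)) := by ring_nf
    _ ≤ Gamma p ^ (1 - t) * Gamma (p + 1) ^ t :=
      Gamma_mul_add_mul_le_rpow_Gamma_mul_rpow_Gamma hp (by linarith) (by linarith) ht₀ (by ring)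
    _ = Gamma p * p ^ t := by
      rw [Gamma_add_one hp.ne', mul_rpow hp.le hΓ.le, mul_left_comm, ← rpow_add hΓ,
        sub_add_cancel, rpow_one, mul_comm]

noncomputable def gammaRatio (a x : ℝ) : ℝ := Gamma (x + a) / (Gamma x * x ^ a)

theorem gammaRatio_zero {x : ℝ} (hx : 0 < x) : gammaRatio 0 x = 1 := by
  simp [gammaRatio, (Gamma_pos_of_pos hx).ne']

theorem gammaRatio_add_one {a x : ℝ} (ha : 0 ≤ a) (hx : 0 < x) :
    gammaRatio (a + 1) x = (1 + a / x) * gammaRatio a x := by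
  rw [gammaRatio, gammaRatio, ← add_assoc, Gamma_add_one (by positivity), rpow_add_one hx.ne']
  field_simp

theorem gammaRatio_le_one {s x : ℝ} (hx : 0 < x) (hs₀ : 0 < s) (hs₁ : s < 1) :
    gammaRatio s x ≤ 1 :=
  div_le_one_of_le₀ (Gamma_add_le_Gamma_mul_rpow hx hs₀ hs₁) (by positivity)

theorem div_add_le_gammaRatio {s x : ℝ} (hx : 0 < x) (hs₀ : 0 < s) (hs₁ : s < 1) :
    x / (x + s) ≤ gammaRatio s x := by
  have hxs : 0 < x + s := by linarith
  -- log-convexity between `x + s` and `x + s + 1` bounds `Γ (x + 1) = x Γ x` from above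
  have h := Gamma_add_le_Gamma_mul_rpow hxs (by linarith : 0 < 1 - s) (by linarith)
  rw [add_add_sub_cancel, Gamma_add_one hx.ne'] at h
  have hbase : 0 < x / (x + s) := div_pos hx hxs
  calc x / (x + s) ≤ (x / (x + s)) ^ (1 - s) := by
        simpa using rpow_le_rpow_of_exponent_ge hbase ((div_le_one hxs).2 (by linarith))
          (by linarith : 1 - s ≤ 1)
    _ ≤ gammaRatio s x := by
      rw [gammaRatio, div_rpow hx.le hxs.le, div_le_div_iff₀ (by positivity) (by positivity)]
      calc x ^ (1 - s) * (Gamma x * x ^ s) = x * Gamma x := by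
            rw [mul_left_comm, ← rpow_add hx, sub_add_cancel, rpow_one, mul_comm]
        _ ≤ Gamma (x + s) * (x + s) ^ (1 - s) := h

theorem gammaRatio_bounds_of_lt_one {s x : ℝ} (hx : 1 ≤ x) (hs₀ : 0 < s) (hs₁ : s < 1) :
    1 / 2 ≤ gammaRatio s x ∧ |gammaRatio s x - 1| ≤ 1 / x := by
  have hx₀ : 0 < x := by linarith
  have hlow := div_add_le_gammaRatio hx₀ hs₀ hs₁
  have hup := gammaRatio_le_one hx₀ hs₀ hs₁
  have half_le : 1 / 2 ≤ x / (x + s) := by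
    rw [div_le_div_iff₀ (by norm_num) (by linarith)]; linarith
  have sub_le : 1 - x / (x + s) ≤ 1 / x := by
    rw [one_sub_div (by linarith), add_sub_cancel_left, div_le_div_iff₀ (by linarith) hx₀]
    nlinarith
  exact ⟨half_le.trans hlow, by rw [abs_sub_comm, abs_of_nonneg (by linarith)]; linarith⟩

theorem gammaRatio_add_one_bounds {a C x : ℝ} (ha : 0 ≤ a) (hx : 1 ≤ x)
    (h_half : 1 / 2 ≤ gammaRatio a x) (h_err : |gammaRatio a x - 1| ≤ C / x) :
    1 / 2 ≤ gammaRatio (a + 1) x ∧ |gammaRatio (a + 1) x - 1| ≤ (C + a * (1 + C)) / x := by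
  have hx₀ : 0 < x := by linarith
  have ha_div : 0 ≤ a / x := div_nonneg ha hx₀.le
  have hC : 0 ≤ C := by
    have := (abs_nonneg _).trans h_err
    rwa [le_div_iff₀ hx₀, zero_mul] at this
  have hg_le : gammaRatio a x ≤ 1 + C := by
    have := (abs_le.1 h_err).2
    linarith [div_le_self hC hx]
  rw [gammaRatio_add_one ha hx₀]
  refine ⟨by nlinarith, ?_⟩
  calc |(1 + a / x) * gammaRatio a x - 1|
      = |(gammaRatio a x - 1) + a / x * gammaRatio a x| := by ring_nf
    _ ≤ C / x + a / x * (1 + C) := by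
      refine (abs_add_le _ _).trans (add_le_add h_err ?_)
      rw [abs_of_nonneg (by nlinarith)]
      exact mul_le_mul_of_nonneg_left hg_le ha_div
    _ = (C + a * (1 + C)) / x := by ring

theorem exists_gammaRatio_bounds {a : ℝ} (ha : 0 ≤ a) :
    ∃ C, ∀ x, 1 ≤ x → 1 / 2 ≤ gammaRatio a x ∧ |gammaRatio a x - 1| ≤ C / x := by
  induction h : ⌊a⌋₊ generalizing a with
  | zero =>
    rcases ha.eq_or_lt with rfl | ha₀
    · refine ⟨0, fun x hx => ?_⟩
      rw [gammaRatio_zero (by linarith)]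
      norm_num
    · exact ⟨1, fun x hx => gammaRatio_bounds_of_lt_one hx ha₀ (Nat.floor_eq_zero.1 h)⟩
  | succ m ih =>
    have ha₁ : 1 ≤ a := by
      by_contra! h'
      simp [Nat.floor_eq_zero.2 h'] at h
    obtain ⟨C, hC⟩ := ih (sub_nonneg.2 ha₁) (by rw [Nat.floor_sub_one, h]; rfl)
    refine ⟨C + (a - 1) * (1 + C), fun x hx => ?_⟩
    simpa using gammaRatio_add_one_bounds (sub_nonneg.2 ha₁) hx (hC x hx).1 (hC x hx).2

theorem polyaP_eq_zero_of_lt (α β : ℝ) {n k : ℕ} (h : n < k) : polyaP α β n k = 0 := by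
  induction n generalizing k with
  | zero => obtain ⟨k, rfl⟩ : ∃ k', k = k' + 1 := ⟨k - 1, by omega⟩; simp [polyaP]
  | succ n ih =>
    obtain ⟨k, rfl⟩ : ∃ k', k = k' + 1 := ⟨k - 1, by omega⟩
    simp [polyaP, ih (by omega : n < k + 1), ih (by omega : n < k)]

/-- `P(Y_{x+y} = x)` written with Gamma functions of the real variables `x` and `y`. -/
noncomputable def polyaMass (α β x y : ℝ) : ℝ :=
  Gamma (α + β) / (Gamma α * Gamma β) * (Gamma (x + α) * Gamma (y + β) * Gamma (x + y + 1)) /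
    (Gamma (x + 1) * Gamma (y + 1) * Gamma (x + y + α + β))

theorem polyaMass_comm (α β x y : ℝ) : polyaMass α β x y = polyaMass β α y x := by
  simp only [polyaMass, add_comm β α, add_comm y x, mul_comm (Gamma β), add_right_comm _ β α]
  ring

section polyaMass

variable {α β : ℝ}

theorem polyaMass_add_one_left (hα : 0 < α) (hβ : 0 < β) {x y : ℝ} (hx : 0 ≤ x) (hy : 0 ≤ y) :
    polyaMass α β (x + 1) y =
      polyaMass α β x y * ((x + α) * (x + y + 1) / ((x + 1) * (x + y + α + β))) := by
  rw [polyaMass, polyaMass, show x + 1 + α = x + α + 1 by ring,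
    show x + 1 + y + 1 = x + y + 1 + 1 by ring, show x + 1 + y + α + β = x + y + α + β + 1 by ring,
    Gamma_add_one (show x + α ≠ 0 by positivity), Gamma_add_one (show x + y + 1 ≠ 0 by positivity),
    Gamma_add_one (show x + 1 ≠ 0 by positivity),
    Gamma_add_one (show x + y + α + β ≠ 0 by positivity)]
  field_simp

theorem polyaMass_add_one_right (hα : 0 < α) (hβ : 0 < β) {x y : ℝ} (hx : 0 ≤ x) (hy : 0 ≤ y) :
    polyaMass α β x (y + 1) =
      polyaMass α β x y * ((y + β) * (x + y + 1) / ((y + 1) * (x + y + α + β))) := by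
  rw [polyaMass_comm, polyaMass_add_one_left hβ hα hy hx, ← polyaMass_comm]
  ring_nf

theorem polyaMass_zero_add_one (hα : 0 < α) (hβ : 0 < β) {y : ℝ} (hy : 0 ≤ y) :
    polyaMass α β 0 (y + 1) = polyaMass α β 0 y * ((β + y) / (α + β + y)) := by
  rw [polyaMass_add_one_right hα hβ le_rfl hy]
  field_simp
  ring

theorem polyaMass_add_one_zero (hα : 0 < α) (hβ : 0 < β) {x : ℝ} (hx : 0 ≤ x) :
    polyaMass α β (x + 1) 0 = polyaMass α β x 0 * ((α + x) / (α + β + x)) := by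
  rw [polyaMass_add_one_left hα hβ hx le_rfl]
  field_simp
  ring

theorem polyaMass_add_one_add_one (hα : 0 < α) (hβ : 0 < β) {x y : ℝ} (hx : 0 ≤ x) (hy : 0 ≤ y) :
    polyaMass α β (x + 1) (y + 1) =
      polyaMass α β (x + 1) y * ((β + y) / (α + β + (x + y + 1))) +
        polyaMass α β x (y + 1) * ((α + x) / (α + β + (x + y + 1))) := by
  rw [polyaMass_add_one_left hα hβ hx (by positivity), polyaMass_add_one_left hα hβ hx hy,
    polyaMass_add_one_right hα hβ hx hy]
  field_simp
  ring

theorem polyaP_add_eq_polyaMass (hα : 0 < α) (hβ : 0 < β) (i j : ℕ) :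
    polyaP α β (i + j) i = polyaMass α β i j := by
  induction h : i + j generalizing i j with
  | zero =>
    obtain ⟨rfl, rfl⟩ : i = 0 ∧ j = 0 := by omega
    simp only [polyaP, ↓reduceIte, polyaMass, Nat.cast_zero, zero_add, add_zero, Gamma_one,
      mul_one, one_mul]
    field_simp
  | succ n ih =>
    rcases i with _ | i <;> rcases j with _ | j
    · omega
    · obtain rfl : n = j := by omega
      rw [polyaP, ih 0 n (zero_add n)]
      push_cast
      rw [polyaMass_zero_add_one hα hβ n.cast_nonneg]
    · obtain rfl : n = i := by omega
      rw [polyaP, polyaP_eq_zero_of_lt α β (Nat.lt_succ_self n), ih n 0 (add_zero n)]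
      push_cast
      rw [polyaMass_add_one_zero hα hβ n.cast_nonneg]
      ring
    · obtain rfl : n = i + 1 + j := by omega
      rw [polyaP, ih (i + 1) j rfl, ih i (j + 1) (by omega)]
      push_cast
      rw [polyaMass_add_one_add_one hα hβ i.cast_nonneg j.cast_nonneg]
      ring_nf

end polyaMass

theorem polyaMass_eq_betaDen_mul {α β x y : ℝ} (hx : 0 < x) (hy : 0 < y) :
    polyaMass α β x y = (x + y)⁻¹ * betaDen α β (x / (x + y)) *
      (gammaRatio α x * gammaRatio β y / gammaRatio (α + β) (x + y)) := by
  have hxy : 0 < x + y := add_pos hx hy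
  rw [polyaMass, betaDen, gammaRatio, gammaRatio, gammaRatio, one_sub_div hxy.ne',
    add_sub_cancel_left, div_rpow hx.le hxy.le, div_rpow hy.le hxy.le, rpow_sub_one hx.ne',
    rpow_sub_one hy.ne', rpow_sub_one hxy.ne', rpow_sub_one hxy.ne', rpow_add hxy,
    Gamma_add_one hx.ne', Gamma_add_one hy.ne', Gamma_add_one hxy.ne', ← add_assoc]
  field_simp

theorem betaDen_nonneg {α β x : ℝ} (hα : 0 < α) (hβ : 0 < β) (hx₀ : 0 ≤ x) (hx₁ : x ≤ 1) :
    0 ≤ betaDen α β x := by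
  have : 0 ≤ 1 - x := sub_nonneg.2 hx₁
  unfold betaDen
  positivity

theorem abs_mul_div_sub_one_le {g₁ g₂ g₃ c x y z : ℝ} (hx : 1 ≤ x) (hy : 1 ≤ y) (hxz : x ≤ z)
    (h₁ : |g₁ - 1| ≤ c / x) (h₂ : |g₂ - 1| ≤ c / y) (h₃ : |g₃ - 1| ≤ c / z)
    (h₃_half : 1 / 2 ≤ g₃) :
    |g₁ * g₂ / g₃ - 1| ≤ 2 * c * (c + 2) * (1 / x + 1 / y) := by
  have hx₀ : 0 < x := by linarith
  have hy₀ : 0 < y := by linarith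
  have hc : 0 ≤ c := by
    have := (abs_nonneg _).trans h₁
    rwa [le_div_iff₀ hx₀, zero_mul] at this
  have hg₁ : |g₁| ≤ 1 + c :=
    calc |g₁| = |(g₁ - 1) + 1| := by ring_nf
      _ ≤ c / x + 1 := (abs_add_le _ _).trans (by rw [abs_one]; linarith)
      _ ≤ 1 + c := by linarith [div_le_self hc hx]
  have hz : c / z ≤ c / x := div_le_div_of_nonneg_left hc hx₀ hxz
  have hnum : |g₁ * g₂ - g₃| ≤ (1 + c) * (c / y) + 2 * (c / x) :=
    calc |g₁ * g₂ - g₃| = |g₁ * (g₂ - 1) + (g₁ - 1) - (g₃ - 1)| := by ring_nf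
      _ ≤ |g₁| * |g₂ - 1| + |g₁ - 1| + |g₃ - 1| := by
        rw [← abs_mul]; exact (abs_sub _ _).trans (add_le_add_left (abs_add_le _ _) _)
      _ ≤ (1 + c) * (c / y) + c / x + c / x := by gcongr; linarith
      _ = _ := by ring
  calc |g₁ * g₂ / g₃ - 1| = |g₁ * g₂ - g₃| / g₃ := by
        rw [div_sub_one (by linarith), abs_div, abs_of_pos (show 0 < g₃ by linarith)]
    _ ≤ 2 * |g₁ * g₂ - g₃| := by
      rw [div_le_iff₀ (by linarith)]; nlinarith [abs_nonneg (g₁ * g₂ - g₃)]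
    _ ≤ 2 * ((1 + c) * (c / y) + 2 * (c / x)) := by gcongr
    _ ≤ 2 * c * (c + 2) * (1 / x + 1 / y) := by
      rw [div_eq_mul_one_div c x, div_eq_mul_one_div c y]
      nlinarith [mul_nonneg (mul_nonneg hc hc) (one_div_nonneg.2 hx₀.le),
        mul_nonneg hc (one_div_nonneg.2 hy₀.le)]

/-- Local limit estimate: `P(Y_n = k) = n⁻¹ f_{α,β}(k/n) (1 + O(1/k) + O(1/(n−k)))`,
uniformly over `1 ≤ k ≤ n − 1`. -/
theorem polya_local_limit (α β : ℝ) (hα : 0 < α) (hβ : 0 < β) :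
    ∃ C : ℝ, ∀ n : ℕ, 1 ≤ n → ∀ k : ℕ, 1 ≤ k → k ≤ n - 1 →
      |polyaP α β n k - (n : ℝ)⁻¹ * betaDen α β (k / n)| ≤
        C * (n : ℝ)⁻¹ * betaDen α β (k / n) * (1 / k + 1 / ((n : ℝ) - k)) := by
  obtain ⟨C₁, hC₁⟩ := exists_gammaRatio_bounds hα.le
  obtain ⟨C₂, hC₂⟩ := exists_gammaRatio_bounds hβ.le
  obtain ⟨C₃, hC₃⟩ := exists_gammaRatio_bounds (add_pos hα hβ).le
  set c := max C₁ (max C₂ C₃)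
  refine ⟨2 * c * (c + 2), fun n hn k hk hkn => ?_⟩
  have hx : (1 : ℝ) ≤ k := by exact_mod_cast hk
  have hxy : (k : ℝ) + 1 ≤ n := by exact_mod_cast (by omega : k + 1 ≤ n)
  have hy : (1 : ℝ) ≤ n - k := by linarith
  have hP := polyaP_add_eq_polyaMass hα hβ k (n - k)
  rw [Nat.add_sub_cancel' (by omega), Nat.cast_sub (by omega)] at hP
  have hf : 0 ≤ betaDen α β (k / n) :=
    betaDen_nonneg hα hβ (by positivity) (div_le_one_of_le₀ (by linarith) (by positivity))
  have hR := abs_mul_div_sub_one_le (c := c) hx hy (by linarith : (k : ℝ) ≤ n)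
    ((hC₁ k hx).2.trans (by gcongr; exact le_max_left _ _))
    ((hC₂ _ hy).2.trans (by gcongr; exact (le_max_left _ _).trans (le_max_right _ _)))
    ((hC₃ n (by linarith)).2.trans (by gcongr; exact (le_max_right _ _).trans (le_max_right _ _)))
    (hC₃ n (by linarith)).1
  rw [hP, polyaMass_eq_betaDen_mul (by linarith) (by linarith), add_sub_cancel,
    ← mul_sub_one, abs_mul, abs_of_nonneg (by positivity)]
  calc (n : ℝ)⁻¹ * betaDen α β (k / n) * |_ - 1|
      ≤ (n : ℝ)⁻¹ * betaDen α β (k / n) * (2 * c * (c + 2) * (1 / k + 1 / ((n : ℝ) - k))) := by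
        gcongr
    _ = _ := by ring
end

section
/- Suppose X and Y are real random variables such that for some integer K, F_Y(x − K) ≤ F_X(x) ≤ F_Y(x + K) for all x, where Y has a continuous distribution function. Then there is a coupling (X', Y') with X' ~ X, Y' ~ Y and |X' − Y'| ≤ K + 1 almost surely. -/
open MeasureTheory

/-! Realise both laws on `((0, 1), Lebesgue)` through their quantile functions
`Q(p) = inf {x | p ≤ F(x)}`, so that `Q(p) ≤ y ↔ p ≤ F(y)`. A shifted comparison of cdfs
`F_ν(x) ≤ F_μ(x + c)` then becomes the pointwise bound `Q_μ ≤ Q_ν + c`, and the two halves of the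
sandwich bound `Q_μ - Q_ν` by `K` in both directions. -/

namespace ProbabilityTheory

open Set Filter Topology

/-- Set to `0` off `(0, 1)`, where the infimum would be a junk value. -/
noncomputable def quantile (m : Measure ℝ) (p : ℝ) : ℝ :=
  if p ∈ Ioo 0 1 then sInf {x | p ≤ cdf m x} else 0

lemma cdf_le_cdf_iff {μ ν : Measure ℝ} [IsProbabilityMeasure μ] [IsProbabilityMeasure ν]
    {x y : ℝ} : cdf μ x ≤ cdf ν y ↔ μ (Iic x) ≤ ν (Iic y) := by
  rw [← ofReal_cdf, ← ofReal_cdf, ENNReal.ofReal_le_ofReal_iff (cdf_nonneg _ _)]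

section

variable (m : Measure ℝ)

lemma quantile_le_iff {p : ℝ} (hp : p ∈ Ioo 0 1) (y : ℝ) : quantile m p ≤ y ↔ p ≤ cdf m y := by
  set S := {x | p ≤ cdf m x}
  rw [quantile, if_pos hp]
  have hne : S.Nonempty := ((tendsto_cdf_atTop m).eventually (eventually_ge_nhds hp.2)).exists
  obtain ⟨x₀, hx₀⟩ := ((tendsto_cdf_atBot m).eventually (eventually_lt_nhds hp.1)).exists
  have hbdd : BddBelow S := ⟨x₀, fun x hx ↦ le_of_not_ge fun hxx₀ ↦
    (hx.trans (monotone_cdf m hxx₀)).not_gt hx₀⟩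
  -- right continuity of the cdf puts the infimum itself in `S`
  have hmem : p ≤ cdf m (sInf S) := by
    refine ge_of_tendsto (((cdf m).right_continuous _).mono Ioi_subset_Ici_self).tendsto ?_
    filter_upwards [self_mem_nhdsWithin] with z hz
    obtain ⟨s, hsS, hsz⟩ := exists_lt_of_csInf_lt hne hz
    exact hsS.trans (monotone_cdf m hsz.le)
  exact ⟨fun h ↦ hmem.trans (monotone_cdf m h), fun h ↦ csInf_le hbdd h⟩

lemma measurable_quantile : Measurable (quantile m) := by
  refine measurable_of_Iic fun x ↦ ?_
  have hpre : quantile m ⁻¹' Iic x = Ioo 0 1 ∩ Iic (cdf m x) ∪ (Ioo 0 1)ᶜ ∩ {_p | 0 ≤ x} := by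
    ext p
    by_cases hp : p ∈ Ioo 0 1
    · simp [hp, quantile_le_iff m hp]
    · simp [hp, quantile]
  rw [hpre]
  exact (measurableSet_Ioo.inter measurableSet_Iic).union
    (measurableSet_Ioo.compl.inter (.const _))

end

lemma volume_Ioo_zero_one_inter_Iic {c : ℝ} (hc : c ≤ 1) :
    volume (Ioo 0 1 ∩ Iic c) = ENNReal.ofReal c := by
  refine le_antisymm ?_ ?_
  · calc volume (Ioo 0 1 ∩ Iic c) ≤ volume (Icc 0 c) := measure_mono fun p hp ↦ ⟨hp.1.1.le, hp.2⟩
      _ = ENNReal.ofReal c := by simp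
  · calc ENNReal.ofReal c = volume (Ioo 0 c) := by simp
      _ ≤ volume (Ioo 0 1 ∩ Iic c) := measure_mono fun p hp ↦ ⟨⟨hp.1, hp.2.trans_le hc⟩, hp.2.le⟩

instance : IsProbabilityMeasure (volume.restrict (Ioo (0 : ℝ) 1)) := ⟨by simp⟩

theorem map_quantile (m : Measure ℝ) [IsProbabilityMeasure m] :
    (volume.restrict (Ioo 0 1)).map (quantile m) = m := by
  refine Measure.ext_of_Iic _ _ fun x ↦ ?_
  rw [Measure.map_apply (measurable_quantile m) measurableSet_Iic,
    Measure.restrict_apply' measurableSet_Ioo, ← ofReal_cdf,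
    ← volume_Ioo_zero_one_inter_Iic (cdf_le_one m x), inter_comm]
  congr 1
  ext p
  exact and_congr_right fun hp ↦ quantile_le_iff m hp x

lemma quantile_le_quantile_add {μ ν : Measure ℝ} {c : ℝ} (h : ∀ x, cdf ν x ≤ cdf μ (x + c))
    {p : ℝ} (hp : p ∈ Ioo 0 1) : quantile μ p ≤ quantile ν p + c :=
  (quantile_le_iff μ hp _).2 (((quantile_le_iff ν hp _).1 le_rfl).trans (h _))

end ProbabilityTheory

open ProbabilityTheory Set

theorem monotone_coupling_of_cdf_sandwich_general
    (μ ν : Measure ℝ) [IsProbabilityMeasure μ] [IsProbabilityMeasure ν]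
    (K : ℤ)
    (hsandwich : ∀ x : ℝ,
      ν (Set.Iic (x - K)) ≤ μ (Set.Iic x) ∧ μ (Set.Iic x) ≤ ν (Set.Iic (x + K))) :
    ∃ (Ω : Type) (m0 : MeasurableSpace Ω) (P : Measure Ω) (_ : IsProbabilityMeasure P)
      (X' Y' : Ω → ℝ),
      Measurable X' ∧ Measurable Y' ∧
      P.map X' = μ ∧ P.map Y' = ν ∧
      ∀ᵐ ω ∂P, |X' ω - Y' ω| ≤ (K : ℝ) + 1 := by
  refine ⟨ℝ, inferInstance, volume.restrict (Ioo 0 1), inferInstance, quantile μ, quantile ν,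
    measurable_quantile μ, measurable_quantile ν, map_quantile μ, map_quantile ν, ?_⟩
  filter_upwards [ae_restrict_mem measurableSet_Ioo] with p hp
  have hμν : quantile μ p ≤ quantile ν p + K := quantile_le_quantile_add
    (fun x ↦ cdf_le_cdf_iff.2 (by simpa using (hsandwich (x + K)).1)) hp
  have hνμ : quantile ν p ≤ quantile μ p + K :=
    quantile_le_quantile_add (fun x ↦ cdf_le_cdf_iff.2 (hsandwich x).2) hp
  rw [abs_le]
  constructor <;> linarith

/-- If the cdfs of laws `μ` (of `X`) and `ν` (of `Y`) satisfy
`F_ν(x − K) ≤ F_μ(x) ≤ F_ν(x + K)` for all `x`, where `ν` is atomless (continuous cdf),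
then there is a coupling `(X', Y')` with `X' ~ μ`, `Y' ~ ν` and `|X' − Y'| ≤ K + 1` a.s. -/
theorem monotone_coupling_of_cdf_sandwich
    (μ ν : Measure ℝ) [IsProbabilityMeasure μ] [IsProbabilityMeasure ν]
    (K : ℤ) (hcont : ∀ x : ℝ, ν {x} = 0)
    (hsandwich : ∀ x : ℝ,
      ν (Set.Iic (x - K)) ≤ μ (Set.Iic x) ∧ μ (Set.Iic x) ≤ ν (Set.Iic (x + K))) :
    ∃ (Ω : Type) (m0 : MeasurableSpace Ω) (P : Measure Ω) (_ : IsProbabilityMeasure P)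
      (X' Y' : Ω → ℝ),
      Measurable X' ∧ Measurable Y' ∧
      P.map X' = μ ∧ P.map Y' = ν ∧
      ∀ᵐ ω ∂P, |X' ω - Y' ω| ≤ (K : ℝ) + 1 :=
  monotone_coupling_of_cdf_sandwich_general μ ν K hsandwich
end

section
/- For a two-color Pólya urn with a=1 and initial composition (α,β), where the first color has initial weight α = 1 and the second has weight β > 0: for all 1 ≤ k ≤ 3n/4, |P(Y_n = k) − ∫_{(k−1)/n}^{k/n} β(1−x)^{β−1} dx| ≤ C n^{−2}. -/
lemma polyaP_eq_zero (α β : ℝ) : ∀ n k : ℕ, n < k → polyaP α β n k = 0 := by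
  intro n
  induction n with
  | zero =>
    intro k hk
    have : k ≠ 0 := by omega
    simp [polyaP, this]
  | succ n ih =>
    intro k hk
    match k, hk with
    | j+1, hk =>
      rw [polyaP, ih (j+1) (by omega), ih j (by omega)]
      ring

lemma polyaP_closed (β : ℝ) (hβ : 0 < β) :
    ∀ n k : ℕ, k ≤ n → polyaP 1 β n k =
      β / ((n - k : ℕ) + β) *
        ∏ i ∈ Finset.Ico (n - k) n, (((i : ℝ) + 1) / ((i : ℝ) + 1 + β)) := by
  intro n
  induction n with
  | zero =>
    intro k hk; interval_cases k
    simp [polyaP]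
    field_simp
  | succ n ih =>
    have hden : (1 : ℝ) + β + n ≠ 0 := by positivity
    intro k hk
    match k with
    | 0 =>
      rw [polyaP, ih 0 (Nat.zero_le n)]
      simp only [Nat.sub_zero, Finset.Ico_self, Finset.prod_empty, mul_one]
      have h1 : ((n : ℝ) + β) ≠ 0 := by positivity
      have h2 : ((n : ℝ) + 1 + β) ≠ 0 := by positivity
      push_cast
      field_simp
      ring
    | j + 1 =>
      rcases Nat.lt_or_ge j n with hjn | hjn
      · -- j + 1 ≤ n
        have hj1 : j + 1 ≤ n := hjn
        rw [polyaP, ih (j+1) hj1, ih j (by omega)]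
        set a : ℕ := n - (j+1) with ha
        have hm' : n - j = a + 1 := by omega
        have hsub : n + 1 - (j + 1) = a + 1 := by omega
        have han : a < n := by omega
        rw [hm', hsub]
        rw [Finset.prod_eq_prod_Ico_succ_bot han, Finset.prod_Ico_succ_top (by omega : a + 1 ≤ n)]
        have hcast : (j : ℝ) + 1 = (n : ℝ) - a := by
          have : a + (j + 1) = n := by omega
          have := congrArg (Nat.cast : ℕ → ℝ) this
          push_cast at this
          linarith
        have e1 : ((a : ℝ) + β) ≠ 0 := by positivity
        have e2 : ((a : ℝ) + 1 + β) ≠ 0 := by positivity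
        have e3 : ((n : ℝ) + 1 + β) ≠ 0 := by positivity
        have e4 : (β + (↑n - (↑j + 1))) = β + a := by rw [hcast]; ring
        have e5 : (1 : ℝ) + (j : ℝ) = (n : ℝ) - a := by linarith [hcast]
        rw [e4, e5]
        push_cast
        set P : ℝ := ∏ i ∈ Finset.Ico (a+1) n, ((i : ℝ) + 1) with hP
        set Q : ℝ := ∏ i ∈ Finset.Ico (a+1) n, ((i : ℝ) + 1 + β) with hQ
        have hQ0 : Q ≠ 0 := by
          rw [hQ]
          exact Finset.prod_ne_zero_iff.mpr (fun i _ => by positivity)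
        field_simp
        ring
      · -- j = n
        have hj : j = n := by omega
        subst hj
        rw [polyaP, polyaP_eq_zero 1 β j (j+1) (by omega), ih j le_rfl]
        simp only [Nat.sub_self]
        rw [Finset.prod_Ico_succ_top (Nat.zero_le j)]
        have e3 : ((j : ℝ) + 1 + β) ≠ 0 := by positivity
        push_cast
        set P : ℝ := ∏ i ∈ Finset.Ico 0 j, (((i:ℝ) + 1) / ((i:ℝ) + 1 + β)) with hP
        field_simp
        ring

open Real Finset

lemma log1p_le {x : ℝ} (hx : 0 ≤ x) : Real.log (1+x) ≤ x := by
  have := Real.log_le_sub_one_of_pos (by linarith : (0:ℝ) < 1 + x)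
  linarith

lemma le_log1p {x : ℝ} (hx : 0 ≤ x) : x/(1+x) ≤ Real.log (1+x) := by
  have h1 : (0:ℝ) < 1 + x := by linarith
  have := Real.log_le_sub_one_of_pos (show (0:ℝ) < (1+x)⁻¹ by positivity)
  rw [Real.log_inv] at this
  have h2 : (1+x)⁻¹ - 1 = -(x/(1+x)) := by field_simp; ring
  linarith

lemma sum_telescope_Ico (f : ℕ → ℝ) {m n : ℕ} (h : m ≤ n) :
    ∑ i ∈ Finset.Ico m n, (f (i+1) - f i) = f n - f m := by
  induction n, h using Nat.le_induction with
  | base => simp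
  | succ n hmn ih => rw [Finset.sum_Ico_succ_top hmn, ih]; ring

lemma sum_inv_sq_le {m n : ℕ} (hm : 1 ≤ m) :
    ∑ i ∈ Finset.Ico m n, 1/((i:ℝ))^2 ≤ 2/(m:ℝ) := by
  rcases le_or_gt m n with h | h
  · have hle : ∑ i ∈ Finset.Ico m n, 1/((i:ℝ))^2
        ≤ ∑ i ∈ Finset.Ico m n, (2/(i:ℝ) - 2/((i:ℝ)+1)) := by
      apply Finset.sum_le_sum
      intro i hi
      have hi1 : 1 ≤ i := le_trans hm (Finset.mem_Ico.mp hi).1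
      have hi1' : (1:ℝ) ≤ i := by exact_mod_cast hi1
      rw [div_sub_div _ _ (by positivity) (by positivity)]
      rw [div_le_div_iff₀ (by positivity) (by positivity)]
      ring_nf
      nlinarith
    have htel : ∑ i ∈ Finset.Ico m n, (2/(i:ℝ) - 2/((i:ℝ)+1)) = 2/(m:ℝ) - 2/(n:ℝ) := by
      have := sum_telescope_Ico (fun i => -(2/(i:ℝ))) h
      simp only [neg_sub_neg] at this
      rw [← this]
      apply Finset.sum_congr rfl
      intro i _
      push_cast
      ring
    have hn0 : (0:ℝ) ≤ 2/(n:ℝ) := by positivity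
    linarith
  · rw [Finset.Ico_eq_empty (by omega)]
    simp
    positivity

lemma term_bounds {β : ℝ} (hβ : 0 < β) {x : ℝ} (hx : 1 ≤ x) :
    0 ≤ β*Real.log (1+1/x) - Real.log (1+β/(x+1)) ∧
    β*Real.log (1+1/x) - Real.log (1+β/(x+1)) ≤ β*(1+β)/x^2 := by
  have hx0 : (0:ℝ) < x := by linarith
  have h1 : (0:ℝ) ≤ 1/x := by positivity
  have h2 : (0:ℝ) ≤ β/(x+1) := by positivity
  have e1 : (1/x)/(1+1/x) = 1/(x+1) := by
    rw [div_eq_div_iff (by positivity) (by positivity)]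
    field_simp
  have e2 : (β/(x+1))/(1+β/(x+1)) = β/(x+1+β) := by
    rw [div_eq_div_iff (by positivity) (by positivity)]
    field_simp
  constructor
  · have l1 : 1/(x+1) ≤ Real.log (1+1/x) := by rw [← e1]; exact le_log1p h1
    have l2 : Real.log (1+β/(x+1)) ≤ β/(x+1) := log1p_le h2
    have l3 : β * (1/(x+1)) ≤ β * Real.log (1+1/x) :=
      mul_le_mul_of_nonneg_left l1 hβ.le
    have : β * (1/(x+1)) = β/(x+1) := by ring
    linarith
  · have u1 : Real.log (1+1/x) ≤ 1/x := log1p_le h1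
    have u2 : β/(x+1+β) ≤ Real.log (1+β/(x+1)) := by rw [← e2]; exact le_log1p h2
    have u3 : β * Real.log (1+1/x) ≤ β * (1/x) := mul_le_mul_of_nonneg_left u1 hβ.le
    have e3 : β/x - β/(x+1+β) = β*(1+β)/(x*(x+1+β)) := by
      rw [div_sub_div _ _ (by positivity) (by positivity)]
      rw [div_eq_div_iff (by positivity) (by positivity)]
      ring
    have e4 : β*(1+β)/(x*(x+1+β)) ≤ β*(1+β)/x^2 := by
      apply div_le_div_of_nonneg_left (by positivity) (by positivity)
      nlinarith
    have : β * (1/x) = β/x := by ring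
    linarith

lemma logP_bounds {β : ℝ} (hβ : 0 < β) {m n : ℕ} (hm : 1 ≤ m) (hmn : m ≤ n) :
    Real.log β + (β-1)*Real.log m - β*Real.log n - β/(m:ℝ) ≤
      Real.log (β/((m:ℝ)+β) * ∏ i ∈ Finset.Ico m n, (((i:ℝ)+1)/((i:ℝ)+1+β))) ∧
    Real.log (β/((m:ℝ)+β) * ∏ i ∈ Finset.Ico m n, (((i:ℝ)+1)/((i:ℝ)+1+β))) ≤
      Real.log β + (β-1)*Real.log m - β*Real.log n + 2*β*(1+β)/(m:ℝ) := by
  have hmR : (1:ℝ) ≤ (m:ℝ) := by exact_mod_cast hm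
  have hm0 : (0:ℝ) < m := by linarith
  have hmβ : (0:ℝ) < (m:ℝ)+β := by linarith
  -- expand the log
  have hne : ∀ i ∈ Finset.Ico m n, (((i:ℝ)+1)/((i:ℝ)+1+β)) ≠ 0 := by
    intro i _; positivity
  have hprodpos : (0:ℝ) < ∏ i ∈ Finset.Ico m n, (((i:ℝ)+1)/((i:ℝ)+1+β)) :=
    Finset.prod_pos (fun i _ => by positivity)
  have hlog1 : Real.log (β/((m:ℝ)+β) * ∏ i ∈ Finset.Ico m n, (((i:ℝ)+1)/((i:ℝ)+1+β)))
      = (Real.log β - Real.log ((m:ℝ)+β)) +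
        ∑ i ∈ Finset.Ico m n, (Real.log ((i:ℝ)+1) - Real.log ((i:ℝ)+1+β)) := by
    rw [Real.log_mul (by positivity) hprodpos.ne', Real.log_div hβ.ne' hmβ.ne',
      Real.log_prod hne]
    congr 1
    apply Finset.sum_congr rfl
    intro i _
    rw [Real.log_div (by positivity) (by positivity)]
  -- per-term identity
  set e : ℕ → ℝ := fun i => β*Real.log (1+1/(i:ℝ)) - Real.log (1+β/((i:ℝ)+1)) with he
  have hterm : ∀ i ∈ Finset.Ico m n,
      Real.log ((i:ℝ)+1) - Real.log ((i:ℝ)+1+β)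
        = e i - β*(Real.log ((i+1:ℕ):ℝ) - Real.log (i:ℝ)) := by
    intro i hi
    have hi1 : 1 ≤ i := le_trans hm (Finset.mem_Ico.mp hi).1
    have hiR : (1:ℝ) ≤ (i:ℝ) := by exact_mod_cast hi1
    have hi0 : (0:ℝ) < i := by linarith
    have d1 : (1:ℝ)+1/(i:ℝ) = ((i:ℝ)+1)/(i:ℝ) := by field_simp
    have d2 : (1:ℝ)+β/((i:ℝ)+1) = ((i:ℝ)+1+β)/((i:ℝ)+1) := by field_simp
    simp only [he]
    rw [d1, d2, Real.log_div (by positivity) (by positivity),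
      Real.log_div (by positivity) (by positivity)]
    push_cast
    ring
  have hLsum : ∑ i ∈ Finset.Ico m n, (Real.log ((i:ℝ)+1) - Real.log ((i:ℝ)+1+β))
      = (∑ i ∈ Finset.Ico m n, e i) - β*(Real.log (n:ℝ) - Real.log (m:ℝ)) := by
    rw [Finset.sum_congr rfl hterm, Finset.sum_sub_distrib, ← Finset.mul_sum,
      sum_telescope_Ico (fun i => Real.log (i:ℝ)) hmn]
  -- bounds on S
  have hS0 : 0 ≤ ∑ i ∈ Finset.Ico m n, e i := by
    apply Finset.sum_nonneg
    intro i hi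
    have hi1 : 1 ≤ i := le_trans hm (Finset.mem_Ico.mp hi).1
    have hiR : (1:ℝ) ≤ (i:ℝ) := by exact_mod_cast hi1
    exact (term_bounds hβ hiR).1
  have hS2 : ∑ i ∈ Finset.Ico m n, e i ≤ 2*β*(1+β)/(m:ℝ) := by
    calc ∑ i ∈ Finset.Ico m n, e i ≤ ∑ i ∈ Finset.Ico m n, β*(1+β)/((i:ℝ))^2 := by
          apply Finset.sum_le_sum
          intro i hi
          have hi1 : 1 ≤ i := le_trans hm (Finset.mem_Ico.mp hi).1
          have hiR : (1:ℝ) ≤ (i:ℝ) := by exact_mod_cast hi1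
          exact (term_bounds hβ hiR).2
      _ = β*(1+β) * ∑ i ∈ Finset.Ico m n, 1/((i:ℝ))^2 := by
          rw [Finset.mul_sum]; apply Finset.sum_congr rfl; intro i _; ring
      _ ≤ β*(1+β) * (2/(m:ℝ)) := by
          apply mul_le_mul_of_nonneg_left (sum_inv_sq_le hm) (by positivity)
      _ = 2*β*(1+β)/(m:ℝ) := by ring
  -- bounds on log(m+β) - log m
  have hmb : Real.log ((m:ℝ)+β) - Real.log (m:ℝ) = Real.log (1+β/(m:ℝ)) := by
    rw [show (1:ℝ)+β/(m:ℝ) = ((m:ℝ)+β)/(m:ℝ) by field_simp,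
      Real.log_div hmβ.ne' hm0.ne']
  have hmb1 : 0 ≤ Real.log (1+β/(m:ℝ)) := by
    apply Real.log_nonneg; have : (0:ℝ) ≤ β/(m:ℝ) := by positivity
    linarith
  have hmb2 : Real.log (1+β/(m:ℝ)) ≤ β/(m:ℝ) := log1p_le (by positivity)
  rw [hlog1, hLsum]
  constructor <;> linarith

lemma one_add_rpow_bounds {β : ℝ} (hβ : 0 < β) {u : ℝ} (hu : 0 < u) :
    β*u*Real.exp (-u) ≤ (1+u)^β - 1 ∧ (1+u)^β - 1 ≤ β*u*Real.exp (β*u) := by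
  have h1u : (0:ℝ) < 1 + u := by linarith
  have hlog : (1+u)^β = Real.exp (Real.log (1+u) * β) := Real.rpow_def_of_pos h1u β
  have hl0 : 0 ≤ Real.log (1+u) := Real.log_nonneg (by linarith)
  constructor
  · have a2 : Real.log (1+u)*β + 1 ≤ (1+u)^β := by
      rw [hlog]; exact Real.add_one_le_exp _
    have a3 : u/(1+u) ≤ Real.log (1+u) := le_log1p hu.le
    have a4 : u * Real.exp (-u) ≤ u/(1+u) := by
      have h5 : 1 + u ≤ Real.exp u := by have := Real.add_one_le_exp u; linarith
      have h6 : Real.exp (-u) ≤ 1/(1+u) := by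
        rw [Real.exp_neg]
        rw [inv_eq_one_div]
        apply one_div_le_one_div_of_le h1u h5
      calc u * Real.exp (-u) ≤ u * (1/(1+u)) := mul_le_mul_of_nonneg_left h6 hu.le
        _ = u/(1+u) := by ring
    nlinarith [mul_le_mul_of_nonneg_left a3 hβ.le, mul_le_mul_of_nonneg_left a4 hβ.le]
  · set t := Real.log (1+u) * β with ht
    have ht0 : 0 ≤ t := mul_nonneg hl0 hβ.le
    have htu : t ≤ β*u := by
      have := log1p_le hu.le
      calc t = β * Real.log (1+u) := by ring
        _ ≤ β * u := mul_le_mul_of_nonneg_left this hβ.le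
    have hexp : Real.exp t ≤ Real.exp (β*u) := Real.exp_le_exp.mpr htu
    have key : Real.exp t - 1 ≤ t * Real.exp t := by
      have h7 : -t + 1 ≤ Real.exp (-t) := Real.add_one_le_exp (-t)
      have h8 : Real.exp (-t) = 1/Real.exp t := by rw [Real.exp_neg, inv_eq_one_div]
      have h9 : (0:ℝ) < Real.exp t := Real.exp_pos t
      rw [h8] at h7
      nlinarith [mul_le_mul_of_nonneg_right h7 h9.le, one_div_mul_cancel h9.ne']
    rw [hlog]
    calc Real.exp t - 1 ≤ t * Real.exp t := key
      _ ≤ (β*u) * Real.exp (β*u) := by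
          apply mul_le_mul htu hexp (Real.exp_pos t).le (by positivity)
      _ = β*u*Real.exp (β*u) := by ring

lemma incr_bounds {β : ℝ} (hβ : 0 < β) {m : ℝ} (hm : 1 ≤ m) :
    β * m^(β-1) * Real.exp (-(1/m)) ≤ (m+1)^β - m^β ∧
    (m+1)^β - m^β ≤ β * m^(β-1) * Real.exp (β*(1/m)) := by
  have hm0 : (0:ℝ) < m := by linarith
  have hu : (0:ℝ) < 1/m := by positivity
  have h1 : m + 1 = m * (1+1/m) := by field_simp
  have h2 : (m+1)^β = m^β * (1+1/m)^β := by
    rw [h1, Real.mul_rpow hm0.le (by positivity)]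
  have h3 : m^(β-1) = m^β * (1/m) := by
    rw [Real.rpow_sub hm0, Real.rpow_one]
    ring
  have hmb : (0:ℝ) < m^β := Real.rpow_pos_of_pos hm0 β
  obtain ⟨hlow, hup⟩ := one_add_rpow_bounds hβ hu
  constructor
  · rw [h2, h3]
    nlinarith [mul_le_mul_of_nonneg_left hlow hmb.le]
  · rw [h2, h3]
    nlinarith [mul_le_mul_of_nonneg_left hup hmb.le]

lemma exp_diff_le {x : ℝ} (hx : 0 ≤ x) : Real.exp x - Real.exp (-x) ≤ 2*x*Real.exp x := by
  have h1 : -(2*x) + 1 ≤ Real.exp (-(2*x)) := Real.add_one_le_exp _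
  have h2 : Real.exp (-x) = Real.exp x * Real.exp (-(2*x)) := by
    rw [← Real.exp_add]; ring_nf
  have h3 : (0:ℝ) < Real.exp x := Real.exp_pos x
  nlinarith [mul_le_mul_of_nonneg_left h1 h3.le]

lemma mpow_le {β : ℝ} (hβ : 0 < β) {m n : ℝ} (hm : 0 < m) (hmn : m ≤ n) (h4 : n ≤ 4*m) :
    m^(β-1) ≤ 4*n^(β-1) := by
  have hn : (0:ℝ) < n := lt_of_lt_of_le hm hmn
  rcases le_or_gt 1 β with hb | hb
  · have h1 : m^(β-1) ≤ n^(β-1) := Real.rpow_le_rpow hm.le hmn (by linarith)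
    have h2 : (0:ℝ) < n^(β-1) := Real.rpow_pos_of_pos hn _
    linarith
  · have hz : β - 1 ≤ 0 := by linarith
    have hq : (0:ℝ) < n/4 := by linarith
    have h1 : m^(β-1) ≤ (n/4)^(β-1) :=
      Real.rpow_le_rpow_of_nonpos hq (by linarith) hz
    have h2 : (n/4)^(β-1) = n^(β-1) / 4^(β-1) := Real.div_rpow hn.le (by norm_num) _
    have h3 : (4:ℝ)^(-1:ℝ) ≤ (4:ℝ)^(β-1) :=
      Real.rpow_le_rpow_of_exponent_le (by norm_num) (by linarith)
    have h4' : (4:ℝ)^(-1:ℝ) = 1/4 := by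
      rw [Real.rpow_neg_one]; norm_num
    have h5 : (0:ℝ) < n^(β-1) := Real.rpow_pos_of_pos hn _
    have h6 : n^(β-1) / 4^(β-1) ≤ n^(β-1) / (1/4) := by
      apply div_le_div_of_nonneg_left h5.le (by norm_num)
      rw [← h4']; exact h3
    have h7 : n^(β-1) / (1/4) = 4*n^(β-1) := by ring
    linarith

lemma integral_beta {β : ℝ} (hβ : 0 < β) {a b : ℝ} (hab : a ≤ b) (hb : b < 1) :
    ∫ x in a..b, β * (1-x)^(β-1) = (1-a)^β - (1-b)^β := by
  have huIcc : Set.uIcc a b = Set.Icc a b := Set.uIcc_of_le hab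
  have hderiv : ∀ x ∈ Set.uIcc a b,
      HasDerivAt (fun y => -(1-y)^β) (β * (1-x)^(β-1)) x := by
    intro x hx
    rw [huIcc, Set.mem_Icc] at hx
    have h1x : (0:ℝ) < 1 - x := by linarith [hx.2]
    have h1 : HasDerivAt (fun y : ℝ => 1 - y) (-1) x := (hasDerivAt_id x).const_sub 1
    have h2 : HasDerivAt (fun y : ℝ => y^β) (β*(1-x)^(β-1)) (1-x) :=
      Real.hasDerivAt_rpow_const (Or.inl h1x.ne')
    have h3 : HasDerivAt (fun y : ℝ => -(1-y)^β) (-(β * (1 - x) ^ (β - 1) * -1)) x :=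
      (h2.comp x h1).neg
    convert h3 using 1
    ring
  have hcont : ContinuousOn (fun x => β * (1-x)^(β-1)) (Set.uIcc a b) := by
    apply ContinuousOn.mul continuousOn_const
    apply ContinuousOn.rpow_const (continuousOn_const.sub continuousOn_id)
    intro x hx
    rw [huIcc, Set.mem_Icc] at hx
    left
    have : (0:ℝ) < 1 - x := by linarith [hx.2]
    simpa using this.ne'
  rw [intervalIntegral.integral_eq_sub_of_hasDerivAt hderiv
    (hcont.intervalIntegrable)]
  ring

set_option maxHeartbeats 1000000

/-- For the urn with initial weights `(1, β)`: uniformly for `1 ≤ k ≤ 3n/4`,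
`|P(Y_n = k) − ∫_{(k−1)/n}^{k/n} β(1−x)^{β−1} dx| ≤ C n^{−2}`. -/
theorem polya_alpha_one_increment (β : ℝ) (hβ : 0 < β) :
    ∃ C : ℝ, ∀ n : ℕ, 1 ≤ n → ∀ k : ℕ, 1 ≤ k → (k : ℝ) ≤ 3 * n / 4 →
      |polyaP 1 β n k -
          ∫ x in (((k : ℝ) - 1) / n)..((k : ℝ) / n), β * (1 - x) ^ (β - 1)| ≤
        C / (n : ℝ) ^ 2 := by
  set d : ℝ := 12*(1+β)^2 with hd
  have hd0 : (0:ℝ) < d := by positivity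
  refine ⟨8*β*d*Real.exp d, ?_⟩
  intro n hn k hk hk34
  have hn0 : (0:ℝ) < n := by exact_mod_cast hn
  -- k < n
  have hkn : k < n := by
    by_contra h
    push_neg at h
    have : (n:ℝ) ≤ k := by exact_mod_cast h
    linarith
  set m : ℕ := n - k with hm
  have hm1 : 1 ≤ m := by omega
  have hmn : m ≤ n := by omega
  have hmcast : (m:ℝ) = (n:ℝ) - k := by
    have : (m:ℕ) + k = n := by omega
    have := congrArg (Nat.cast : ℕ → ℝ) this
    push_cast at this
    linarith
  have hmR1 : (1:ℝ) ≤ (m:ℝ) := by exact_mod_cast hm1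
  have hm0 : (0:ℝ) < m := by linarith
  have hm4 : (n:ℝ) ≤ 4*(m:ℝ) := by rw [hmcast]; linarith
  -- the probability
  have hp_eq : polyaP 1 β n k =
      β/((m:ℝ)+β) * ∏ i ∈ Finset.Ico m n, (((i:ℝ)+1)/((i:ℝ)+1+β)) := by
    rw [polyaP_closed β hβ n k (le_of_lt hkn)]
  set T : ℝ := β * (m:ℝ)^(β-1) / (n:ℝ)^β with hT
  have hmpow : (0:ℝ) < (m:ℝ)^(β-1) := Real.rpow_pos_of_pos hm0 _
  have hnpow : (0:ℝ) < (n:ℝ)^β := Real.rpow_pos_of_pos hn0 _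
  have hT0 : (0:ℝ) < T := by rw [hT]; positivity
  have hlogT : Real.log T = Real.log β + (β-1)*Real.log m - β*Real.log n := by
    rw [hT, Real.log_div (by positivity) hnpow.ne', Real.log_mul hβ.ne' hmpow.ne',
      Real.log_rpow hm0, Real.log_rpow hn0]
  have hβm := mul_le_mul_of_nonneg_left hm4 hβ.le
  have hb2m := mul_nonneg hβ.le hm0.le
  have hb3m := mul_nonneg (mul_nonneg hβ.le hβ.le) hm0.le
  -- exponent comparisons
  have hc1 : β/(m:ℝ) ≤ d/(n:ℝ) := by
    rw [div_le_div_iff₀ hm0 hn0]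
    nlinarith [hm0.le]
  have hc2 : 2*β*(1+β)/(m:ℝ) ≤ d/(n:ℝ) := by
    rw [div_le_div_iff₀ hm0 hn0]
    nlinarith [hm0.le]
  have hc3 : (1:ℝ)/(m:ℝ) ≤ d/(n:ℝ) := by
    rw [div_le_div_iff₀ hm0 hn0]
    nlinarith [hm0.le]
  -- bounds on p
  have hPpos : (0:ℝ) < β/((m:ℝ)+β) * ∏ i ∈ Finset.Ico m n, (((i:ℝ)+1)/((i:ℝ)+1+β)) := by
    apply mul_pos (by positivity)
    exact Finset.prod_pos (fun i _ => by positivity)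
  obtain ⟨hpl, hpu⟩ := logP_bounds hβ hm1 hmn
  have hplow : T * Real.exp (-(d/(n:ℝ))) ≤ polyaP 1 β n k := by
    rw [hp_eq, ← Real.exp_log hPpos, ← Real.exp_log hT0, ← Real.exp_add]
    apply Real.exp_le_exp.mpr
    rw [hlogT]
    linarith
  have hpup : polyaP 1 β n k ≤ T * Real.exp (d/(n:ℝ)) := by
    rw [hp_eq, ← Real.exp_log hPpos, ← Real.exp_log hT0, ← Real.exp_add]
    apply Real.exp_le_exp.mpr
    rw [hlogT]
    linarith
  -- the integral
  have hb1 : (k:ℝ)/n < 1 := by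
    rw [div_lt_one hn0]
    have : (k:ℝ) < n := by exact_mod_cast hkn
    linarith
  have hab : ((k:ℝ)-1)/n ≤ (k:ℝ)/n := by
    gcongr <;> linarith
  have hInt : (∫ x in (((k:ℝ)-1)/n)..((k:ℝ)/n), β * (1-x)^(β-1))
      = (((m:ℝ)+1)^β - (m:ℝ)^β)/(n:ℝ)^β := by
    rw [integral_beta hβ hab hb1]
    have e1 : 1 - ((k:ℝ)-1)/n = ((m:ℝ)+1)/n := by
      field_simp
      linarith [hmcast]
    have e2 : 1 - (k:ℝ)/n = (m:ℝ)/n := by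
      field_simp
      linarith [hmcast]
    rw [e1, e2, Real.div_rpow (by positivity) hn0.le, Real.div_rpow hm0.le hn0.le]
    ring
  obtain ⟨hIl, hIu⟩ := incr_bounds hβ hmR1
  have hIlow : T * Real.exp (-(d/(n:ℝ))) ≤
      ∫ x in (((k:ℝ)-1)/n)..((k:ℝ)/n), β * (1-x)^(β-1) := by
    rw [hInt]
    have step1 : T * Real.exp (-(d/(n:ℝ))) ≤ T * Real.exp (-(1/(m:ℝ))) := by
      apply mul_le_mul_of_nonneg_left _ hT0.le
      apply Real.exp_le_exp.mpr
      linarith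
    have step2 : T * Real.exp (-(1/(m:ℝ))) = β * (m:ℝ)^(β-1) * Real.exp (-(1/(m:ℝ))) / (n:ℝ)^β := by
      rw [hT]; ring
    have step3 : β * (m:ℝ)^(β-1) * Real.exp (-(1/(m:ℝ))) / (n:ℝ)^β
        ≤ (((m:ℝ)+1)^β - (m:ℝ)^β)/(n:ℝ)^β := by
      exact (div_le_div_iff_of_pos_right hnpow).mpr hIl
    linarith [step1, step2.le, step2.ge, step3]
  have hIup : (∫ x in (((k:ℝ)-1)/n)..((k:ℝ)/n), β * (1-x)^(β-1))
      ≤ T * Real.exp (d/(n:ℝ)) := by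
    rw [hInt]
    have step1 : T * Real.exp (β*(1/(m:ℝ))) ≤ T * Real.exp (d/(n:ℝ)) := by
      apply mul_le_mul_of_nonneg_left _ hT0.le
      apply Real.exp_le_exp.mpr
      have : β*(1/(m:ℝ)) = β/(m:ℝ) := by ring
      linarith [this.le, this.ge]
    have step2 : T * Real.exp (β*(1/(m:ℝ))) = β * (m:ℝ)^(β-1) * Real.exp (β*(1/(m:ℝ))) / (n:ℝ)^β := by
      rw [hT]; ring
    have step3 : (((m:ℝ)+1)^β - (m:ℝ)^β)/(n:ℝ)^β
        ≤ β * (m:ℝ)^(β-1) * Real.exp (β*(1/(m:ℝ))) / (n:ℝ)^β := by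
      exact (div_le_div_iff_of_pos_right hnpow).mpr hIu
    linarith [step1, step2.le, step2.ge, step3]
  -- T small
  have hTle : T ≤ 4*β/(n:ℝ) := by
    have h1 : (m:ℝ)^(β-1) ≤ 4*(n:ℝ)^(β-1) := mpow_le hβ hm0 (by exact_mod_cast hmn) hm4
    have h2 : (n:ℝ)^(β-1) = (n:ℝ)^β/(n:ℝ) := by
      rw [Real.rpow_sub hn0, Real.rpow_one]
    have h3 : T ≤ β * (4*(n:ℝ)^(β-1)) / (n:ℝ)^β := by
      rw [hT]
      apply (div_le_div_iff_of_pos_right hnpow).mpr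
      nlinarith [hmpow.le]
    have h4 : β * (4*(n:ℝ)^(β-1)) / (n:ℝ)^β = 4*β/(n:ℝ) := by
      rw [h2]
      field_simp
    linarith
  -- final assembly
  have hdn0 : (0:ℝ) ≤ d/(n:ℝ) := by positivity
  have hediff : Real.exp (d/(n:ℝ)) - Real.exp (-(d/(n:ℝ))) ≤ 2*(d/(n:ℝ))*Real.exp d := by
    have h1 := exp_diff_le hdn0
    have h2 : Real.exp (d/(n:ℝ)) ≤ Real.exp d := by
      apply Real.exp_le_exp.mpr
      rw [div_le_iff₀ hn0]
      nlinarith [hd0.le]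
    nlinarith [Real.exp_pos (d/(n:ℝ)), mul_le_mul_of_nonneg_left h2 (mul_nonneg (by norm_num : (0:ℝ) ≤ 2) hdn0)]
  have habs : |polyaP 1 β n k - ∫ x in (((k:ℝ)-1)/n)..((k:ℝ)/n), β * (1-x)^(β-1)|
      ≤ T * (Real.exp (d/(n:ℝ)) - Real.exp (-(d/(n:ℝ)))) := by
    have hTE : T * (Real.exp (d/(n:ℝ)) - Real.exp (-(d/(n:ℝ))))
        = T * Real.exp (d/(n:ℝ)) - T * Real.exp (-(d/(n:ℝ))) := by ring
    rw [abs_sub_le_iff, hTE]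
    constructor <;> linarith
  have hfin : T * (Real.exp (d/(n:ℝ)) - Real.exp (-(d/(n:ℝ))))
      ≤ (4*β/(n:ℝ)) * (2*(d/(n:ℝ))*Real.exp d) := by
    have h0c : 0 ≤ Real.exp (d/(n:ℝ)) - Real.exp (-(d/(n:ℝ))) := by
      have := Real.exp_le_exp.mpr (neg_le_self hdn0)
      linarith
    exact mul_le_mul hTle hediff h0c (by positivity)
  have heq : (4*β/(n:ℝ)) * (2*(d/(n:ℝ))*Real.exp d) = 8*β*d*Real.exp d / (n:ℝ)^2 := by
    field_simp
    ring
  calc |polyaP 1 β n k - ∫ x in (((k:ℝ)-1)/n)..((k:ℝ)/n), β * (1-x)^(β-1)|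
      ≤ T * (Real.exp (d/(n:ℝ)) - Real.exp (-(d/(n:ℝ)))) := habs
    _ ≤ (4*β/(n:ℝ)) * (2*(d/(n:ℝ))*Real.exp d) := hfin
    _ = 8*β*d*Real.exp d / (n:ℝ)^2 := heq
end
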